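/- arXiv:2312.10715 — 9 statements merged into one kernel-verified Lean document; each statement's English description precedes it below -/
import Mathlib

section
/- There exist constants C₁ > 0 and C₂ > 0, depending only on α, β and the boundedness constants of a, b and c, such that for every (u,p) ∈ H × Q there exists (v,q) ∈ H × Q with N(v,q) ≤ C₁ N(u,p) and A((u,p),(v,q)) ≥ C₂ N(u,p)². -/
/-! Test `(u, p)` against `(u + δ w, -p)`, where `w` has `‖w‖ = ‖p‖` and `β‖p‖² ≤ b(w, p)` by the
inf-sup condition. Then `A = a(u,u) + δ a(u,w) + δ b(w,p) + c(p,p)`, and with `M ≥ ‖a‖` and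
`δ = αβ/M²` Young's inequality splits the cross term `δ a(u,w)` between half of `a(u,u)`
(by coercivity) and half of `δβ‖p‖²`. Boundedness of `a` and coercivity bound the norm of the
test pair. -/

noncomputable section SaddlePoint

variable {H Q : Type*} [NormedAddCommGroup H] [NormedSpace ℝ H]
  [NormedAddCommGroup Q] [NormedSpace ℝ Q]

def weightedNormSq (a : H →L[ℝ] H →L[ℝ] ℝ) (c : Q →L[ℝ] Q →L[ℝ] ℝ) (u : H) (p : Q) : ℝ :=
  a u u + ‖p‖ ^ 2 + c p p

def combinedForm (a : H →L[ℝ] H →L[ℝ] ℝ) (b : H →L[ℝ] Q →L[ℝ] ℝ) (c : Q →L[ℝ] Q →L[ℝ] ℝ)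
    (u : H) (p : Q) (v : H) (q : Q) : ℝ :=
  a u v + b v p + b u q - c p q

theorem abs_apply_apply_le_of_opNorm_le {a : H →L[ℝ] H →L[ℝ] ℝ} {M : ℝ} (haM : ‖a‖ ≤ M)
    (x y : H) : |a x y| ≤ M * ‖x‖ * ‖y‖ :=
  (a.le_opNorm₂ x y).trans (by gcongr)

theorem apply_self_nonneg_of_coercive {a : H →L[ℝ] H →L[ℝ] ℝ} {α : ℝ} (hα : 0 ≤ α)
    (ha_coer : ∀ u : H, α * ‖u‖ ^ 2 ≤ a u u) (u : H) : 0 ≤ a u u :=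
  (by positivity : 0 ≤ α * ‖u‖ ^ 2).trans (ha_coer u)

theorem weightedNormSq_nonneg {a : H →L[ℝ] H →L[ℝ] ℝ} {c : Q →L[ℝ] Q →L[ℝ] ℝ} {α : ℝ}
    (hα : 0 ≤ α) (ha_coer : ∀ u : H, α * ‖u‖ ^ 2 ≤ a u u) (hc_pos : ∀ p : Q, 0 ≤ c p p)
    (u : H) (p : Q) : 0 ≤ weightedNormSq a c u p :=
  add_nonneg (add_nonneg (apply_self_nonneg_of_coercive hα ha_coer u) (sq_nonneg _)) (hc_pos p)

theorem exists_norm_eq_and_le_apply_of_infsup {b : H →L[ℝ] Q →L[ℝ] ℝ} {β : ℝ}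
    (hb_infsup : ∀ q : Q, ∃ v : H, v ≠ 0 ∧ β * ‖v‖ * ‖q‖ ≤ b v q) (p : Q) :
    ∃ w : H, ‖w‖ = ‖p‖ ∧ β * ‖p‖ ^ 2 ≤ b w p := by
  obtain ⟨v, hv, hbv⟩ := hb_infsup p
  have hv_pos : 0 < ‖v‖ := norm_pos_iff.mpr hv
  refine ⟨(‖p‖ / ‖v‖) • v, ?_, ?_⟩
  · rw [norm_smul, Real.norm_of_nonneg (by positivity), div_mul_cancel₀ _ hv_pos.ne']
  · calc β * ‖p‖ ^ 2 = ‖p‖ / ‖v‖ * (β * ‖v‖ * ‖p‖) := by field_simp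
      _ ≤ ‖p‖ / ‖v‖ * b v p := by gcongr
      _ = b ((‖p‖ / ‖v‖) • v) p := by simp

theorem combinedForm_add_smul_neg (a : H →L[ℝ] H →L[ℝ] ℝ) (b : H →L[ℝ] Q →L[ℝ] ℝ)
    (c : Q →L[ℝ] Q →L[ℝ] ℝ) (u w : H) (p : Q) (δ : ℝ) :
    combinedForm a b c u p (u + δ • w) (-p) = a u u + δ * a u w + δ * b w p + c p p := by
  simp only [combinedForm, map_add, map_smul, map_neg, smul_eq_mul, add_apply, smul_apply]
  ring

theorem weightedNormSq_add_smul_neg_le {a : H →L[ℝ] H →L[ℝ] ℝ} {c : Q →L[ℝ] Q →L[ℝ] ℝ}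
    {α M δ : ℝ} (hα : 0 < α) (ha_coer : ∀ u : H, α * ‖u‖ ^ 2 ≤ a u u) (haM : ‖a‖ ≤ M)
    (hδ : 0 ≤ δ) (hc_pos : ∀ p : Q, 0 ≤ c p p) {u w : H} {p : Q} (hw : ‖w‖ = ‖p‖) :
    weightedNormSq a c (u + δ • w) (-p) ≤
      (2 * M / α + 2 * M * δ ^ 2 + 1) * weightedNormSq a c u p := by
  have hM : 0 ≤ M := (norm_nonneg a).trans haM
  have hv : ‖u + δ • w‖ ≤ ‖u‖ + δ * ‖p‖ := by
    simpa [norm_smul, abs_of_nonneg hδ, hw] using norm_add_le u (δ • w)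
  have hav : a (u + δ • w) (u + δ • w) ≤ M * (2 * ‖u‖ ^ 2 + 2 * δ ^ 2 * ‖p‖ ^ 2) :=
    calc a (u + δ • w) (u + δ • w) ≤ M * ‖u + δ • w‖ * ‖u + δ • w‖ :=
          (le_abs_self _).trans (abs_apply_apply_le_of_opNorm_le haM _ _)
      _ ≤ M * (‖u‖ + δ * ‖p‖) * (‖u‖ + δ * ‖p‖) := by gcongr
      _ ≤ M * (2 * ‖u‖ ^ 2 + 2 * δ ^ 2 * ‖p‖ ^ 2) := by
          rw [mul_assoc]; gcongr; nlinarith [sq_nonneg (‖u‖ - δ * ‖p‖)]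
  have hu : 2 * M * ‖u‖ ^ 2 ≤ 2 * M / α * a u u := by
    rw [div_mul_eq_mul_div, le_div_iff₀ hα]
    nlinarith [ha_coer u]
  have hau := apply_self_nonneg_of_coercive hα.le ha_coer u
  have hcp := hc_pos p
  simp only [weightedNormSq, norm_neg, map_neg, neg_apply, neg_neg]
  nlinarith [mul_nonneg (by positivity : 0 ≤ 2 * M / α) (add_nonneg (sq_nonneg ‖p‖) hcp),
    mul_nonneg (by positivity : 0 ≤ 2 * M * δ ^ 2) (add_nonneg hau hcp)]

theorem combinedForm_add_smul_neg_ge {a : H →L[ℝ] H →L[ℝ] ℝ} {b : H →L[ℝ] Q →L[ℝ] ℝ}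
    {c : Q →L[ℝ] Q →L[ℝ] ℝ} {α β M : ℝ} (hα : 0 < α) (hβ : 0 < β) (hM : 0 < M)
    (ha_coer : ∀ u : H, α * ‖u‖ ^ 2 ≤ a u u) (haM : ‖a‖ ≤ M) (hc_pos : ∀ p : Q, 0 ≤ c p p)
    {u w : H} {p : Q} (hw : ‖w‖ = ‖p‖) (hbw : β * ‖p‖ ^ 2 ≤ b w p) :
    min (1 / 2) (α * β ^ 2 / (2 * M ^ 2)) * weightedNormSq a c u p ≤
      combinedForm a b c u p (u + (α * β / M ^ 2) • w) (-p) := by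
  set δ := α * β / M ^ 2
  set γ := α * β ^ 2 / (2 * M ^ 2)
  have hδ : 0 ≤ δ := by positivity
  have hδβ : δ * β = 2 * γ := by simp only [δ, γ]; field_simp
  have hyoung : δ * (M * ‖u‖ * ‖p‖) ≤ α / 2 * ‖u‖ ^ 2 + γ * ‖p‖ ^ 2 :=
    calc δ * (M * ‖u‖ * ‖p‖) = α / 2 * (2 * ‖u‖ * (β / M * ‖p‖)) := by
          simp only [δ]; field_simp
      _ ≤ α / 2 * (‖u‖ ^ 2 + (β / M * ‖p‖) ^ 2) := by gcongr; exact two_mul_le_add_sq _ _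
      _ = α / 2 * ‖u‖ ^ 2 + γ * ‖p‖ ^ 2 := by simp only [γ]; field_simp
  have hauw : -(M * ‖u‖ * ‖p‖) ≤ a u w := by
    have := abs_apply_apply_le_of_opNorm_le haM u w
    rw [hw] at this
    exact neg_le_of_abs_le this
  have hlower : a u u / 2 + γ * ‖p‖ ^ 2 + c p p ≤
      combinedForm a b c u p (u + δ • w) (-p) := by
    rw [combinedForm_add_smul_neg]
    nlinarith [mul_le_mul_of_nonneg_left hauw hδ, mul_le_mul_of_nonneg_left hbw hδ, ha_coer u]
  refine le_trans ?_ hlower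
  have hau := apply_self_nonneg_of_coercive hα.le ha_coer u
  have hcp := hc_pos p
  have hmin_le_one : min (1 / 2) γ ≤ 1 := (min_le_left _ _).trans (by norm_num)
  simp only [weightedNormSq]
  nlinarith [mul_le_mul_of_nonneg_right (min_le_left (1 / 2) γ) hau,
    mul_le_mul_of_nonneg_right (min_le_right (1 / 2) γ) (sq_nonneg ‖p‖),
    mul_le_mul_of_nonneg_right hmin_le_one hcp]

end SaddlePoint

theorem combined_form_stability_general
    {H Q : Type*}
    [NormedAddCommGroup H] [InnerProductSpace ℝ H]
    [NormedAddCommGroup Q] [InnerProductSpace ℝ Q]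
    (a : H →L[ℝ] H →L[ℝ] ℝ) (b : H →L[ℝ] Q →L[ℝ] ℝ) (c : Q →L[ℝ] Q →L[ℝ] ℝ)
    (α : ℝ) (hα : 0 < α) (ha_coer : ∀ u : H, α * ‖u‖ ^ 2 ≤ a u u)
    (β : ℝ) (hβ : 0 < β)
    (hb_infsup : ∀ q : Q, ∃ v : H, v ≠ 0 ∧ β * ‖v‖ * ‖q‖ ≤ b v q)
    (hc_pos : ∀ p : Q, 0 ≤ c p p) :
    ∃ C₁ > (0 : ℝ), ∃ C₂ > (0 : ℝ), ∀ (u : H) (p : Q), ∃ (v : H) (q : Q),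
      Real.sqrt (a v v + ‖q‖ ^ 2 + c q q) ≤ C₁ * Real.sqrt (a u u + ‖p‖ ^ 2 + c p p) ∧
      C₂ * Real.sqrt (a u u + ‖p‖ ^ 2 + c p p) ^ 2 ≤
        a u v + b v p + b u q - c p q := by
  set M := ‖a‖ + 1
  have hM : 0 < M := by positivity
  set δ := α * β / M ^ 2
  set K := 2 * M / α + 2 * M * δ ^ 2 + 1
  refine ⟨√K, by positivity, min (1 / 2) (α * β ^ 2 / (2 * M ^ 2)), by positivity,
    fun u p => ?_⟩
  obtain ⟨w, hw, hbw⟩ := exists_norm_eq_and_le_apply_of_infsup hb_infsup p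
  refine ⟨u + δ • w, -p, ?_, ?_⟩
  · calc √(weightedNormSq a c (u + δ • w) (-p)) ≤ √(K * weightedNormSq a c u p) :=
          Real.sqrt_le_sqrt <| weightedNormSq_add_smul_neg_le hα ha_coer (lt_add_one _).le
            (by positivity) hc_pos hw
      _ = √K * √(weightedNormSq a c u p) := Real.sqrt_mul (by positivity) _
  · calc min (1 / 2) (α * β ^ 2 / (2 * M ^ 2)) * √(weightedNormSq a c u p) ^ 2
          = min (1 / 2) (α * β ^ 2 / (2 * M ^ 2)) * weightedNormSq a c u p := by
          rw [Real.sq_sqrt (weightedNormSq_nonneg hα.le ha_coer hc_pos u p)]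
      _ ≤ combinedForm a b c u p (u + δ • w) (-p) :=
          combinedForm_add_smul_neg_ge hα hβ hM ha_coer (lt_add_one _).le hc_pos hw hbw

/-- stability (inf-sup-type) of the combined bilinear form
`A((u,p),(v,q)) = a(u,v) + b(v,p) + b(u,q) − c(p,q)` with respect to the weighted norm
`N(u,p) = (a(u,u) + ‖p‖² + c(p,p))^{1/2}`. -/
theorem combined_form_stability
    {H Q : Type*}
    [NormedAddCommGroup H] [InnerProductSpace ℝ H] [CompleteSpace H]
    [NormedAddCommGroup Q] [InnerProductSpace ℝ Q] [CompleteSpace Q]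
    (a : H →L[ℝ] H →L[ℝ] ℝ) (b : H →L[ℝ] Q →L[ℝ] ℝ) (c : Q →L[ℝ] Q →L[ℝ] ℝ)
    (ha_symm : ∀ u v : H, a u v = a v u)
    (α : ℝ) (hα : 0 < α) (ha_coer : ∀ u : H, α * ‖u‖ ^ 2 ≤ a u u)
    (β : ℝ) (hβ : 0 < β)
    (hb_infsup : ∀ q : Q, ∃ v : H, v ≠ 0 ∧ β * ‖v‖ * ‖q‖ ≤ b v q)
    (hc_symm : ∀ p q : Q, c p q = c q p) (hc_pos : ∀ p : Q, 0 ≤ c p p) :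
    ∃ C₁ > (0 : ℝ), ∃ C₂ > (0 : ℝ), ∀ (u : H) (p : Q), ∃ (v : H) (q : Q),
      Real.sqrt (a v v + ‖q‖ ^ 2 + c q q) ≤ C₁ * Real.sqrt (a u u + ‖p‖ ^ 2 + c p p) ∧
      C₂ * Real.sqrt (a u u + ‖p‖ ^ 2 + c p p) ^ 2 ≤
        a u v + b v p + b u q - c p q :=
  combined_form_stability_general a b c α hα ha_coer β hβ hb_infsup hc_pos
end

section
/- For every continuous linear functional f on H, the penalized saddle-point problem with datum f has a unique solution (u,p) ∈ H × Q, and this solution satisfies N(u,p) ≤ C ‖f‖, where C > 0 depends only on α, β and the boundedness constants of a, b and c. -/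
open InnerProductSpace

/-- The Riesz representation map as a continuous linear map. -/
noncomputable def rieszMap (H : Type*) [NormedAddCommGroup H] [InnerProductSpace ℝ H]
    [CompleteSpace H] : (H →L[ℝ] ℝ) →L[ℝ] H where
  toFun f := (InnerProductSpace.toDual ℝ H).symm f
  map_add' f g := by simp
  map_smul' r f := by simp
  cont := (InnerProductSpace.toDual ℝ H).symm.continuous

theorem rieszMap_inner {H : Type*} [NormedAddCommGroup H] [InnerProductSpace ℝ H]
    [CompleteSpace H] (f : H →L[ℝ] ℝ) (x : H) : ⟪rieszMap H f, x⟫_ℝ = f x :=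
  InnerProductSpace.toDual_symm_apply

set_option maxHeartbeats 2000000 in
/-- well-posedness of the penalized saddle-point problem:
for every bounded linear functional `f` on `H` there is a unique solution `(u,p)`,
and it satisfies `N(u,p) ≤ C ‖f‖` with `C` depending only on `α`, `β` and the
boundedness constants of `a`, `b`, `c`. -/
theorem penalized_saddle_point_wellposed
    {H Q : Type*}
    [NormedAddCommGroup H] [InnerProductSpace ℝ H] [CompleteSpace H]
    [NormedAddCommGroup Q] [InnerProductSpace ℝ Q] [CompleteSpace Q]
    (a : H →L[ℝ] H →L[ℝ] ℝ) (b : H →L[ℝ] Q →L[ℝ] ℝ) (c : Q →L[ℝ] Q →L[ℝ] ℝ)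
    (ha_symm : ∀ u v : H, a u v = a v u)
    (α : ℝ) (hα : 0 < α) (ha_coer : ∀ u : H, α * ‖u‖ ^ 2 ≤ a u u)
    (β : ℝ) (hβ : 0 < β)
    (hb_infsup : ∀ q : Q, ∃ v : H, v ≠ 0 ∧ β * ‖v‖ * ‖q‖ ≤ b v q)
    (hc_symm : ∀ p q : Q, c p q = c q p) (hc_pos : ∀ p : Q, 0 ≤ c p p) :
    ∃ C > (0 : ℝ), ∀ f : H →L[ℝ] ℝ, ∃ (u : H) (p : Q),
      (∀ v : H, a u v + b v p = f v) ∧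
      (∀ q : Q, b u q - c p q = 0) ∧
      Real.sqrt (a u u + ‖p‖ ^ 2 + c p p) ≤ C * ‖f‖ ∧
      (∀ (u' : H) (p' : Q),
        (∀ v : H, a u' v + b v p' = f v) → (∀ q : Q, b u' q - c p' q = 0) →
        u' = u ∧ p' = p) := by
  -- a is a coercive bilinear form
  have haC : IsCoercive a := ⟨α, hα, fun u => by rw [mul_assoc, ← pow_two]; exact ha_coer u⟩
  -- The operator T : Q →L H with a (T q) v = b v q
  let Bop : Q →L[ℝ] H := (rieszMap H).comp b.flip
  let T : Q →L[ℝ] H :=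
    (haC.continuousLinearEquivOfBilin.symm : H →L[ℝ] H).comp Bop
  have hBop : ∀ (q : Q) (v : H), ⟪Bop q, v⟫_ℝ = b v q := by
    intro q v
    have : Bop q = rieszMap H (b.flip q) := rfl
    rw [this, rieszMap_inner, ContinuousLinearMap.flip_apply]
  have hT : ∀ (q : Q) (v : H), a (T q) v = b v q := by
    intro q v
    have h1 : T q = haC.continuousLinearEquivOfBilin.symm (Bop q) := rfl
    calc a (T q) v = ⟪haC.continuousLinearEquivOfBilin (T q), v⟫_ℝ :=
          (haC.continuousLinearEquivOfBilin_apply _ _).symm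
      _ = ⟪Bop q, v⟫_ℝ := by rw [h1, ContinuousLinearEquiv.apply_symm_apply]
      _ = b v q := hBop q v
  -- Schur-complement type bilinear form on Q
  let s : Q →L[ℝ] Q →L[ℝ] ℝ := c + a.bilinearComp T T
  have hs : ∀ p' q' : Q, s p' q' = c p' q' + a (T p') (T q') := by
    intro p' q'
    simp [s, ContinuousLinearMap.add_apply, ContinuousLinearMap.bilinearComp_apply]
  -- lower bound on ‖T q‖
  have hTlow : ∀ q : Q, β * ‖q‖ ≤ (‖a‖ + 1) * ‖T q‖ := by
    intro q
    obtain ⟨v, hv0, hv⟩ := hb_infsup q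
    have hvpos : 0 < ‖v‖ := norm_pos_iff.mpr hv0
    have h1 : b v q = a (T q) v := (hT q v).symm
    have h2 : a (T q) v ≤ ‖a‖ * ‖T q‖ * ‖v‖ :=
      le_trans (le_abs_self _) (by simpa [Real.norm_eq_abs] using a.le_opNorm₂ (T q) v)
    have hTn : (0:ℝ) ≤ ‖T q‖ := norm_nonneg _
    apply le_of_mul_le_mul_right _ hvpos
    nlinarith [norm_nonneg v]
  -- s is coercive
  have hden : (0:ℝ) < (‖a‖ + 1) ^ 2 := by positivity
  have hscoer : IsCoercive s := by
    refine ⟨α * β ^ 2 / (‖a‖ + 1) ^ 2, by positivity, fun q => ?_⟩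
    have hsqq : s q q = c q q + a (T q) (T q) := hs q q
    have h1 := hTlow q
    have h2 := ha_coer (T q)
    have h3 := hc_pos q
    have hsq : (β * ‖q‖) ^ 2 ≤ ((‖a‖ + 1) * ‖T q‖) ^ 2 :=
      pow_le_pow_left₀ (by positivity) h1 2
    have key : α * β ^ 2 / (‖a‖ + 1) ^ 2 * ‖q‖ * ‖q‖ ≤ α * ‖T q‖ ^ 2 := by
      rw [div_mul_eq_mul_div, div_mul_eq_mul_div, div_le_iff₀ hden]
      nlinarith [mul_le_mul_of_nonneg_left hsq hα.le]
    linarith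
  -- the solution operator on Q
  set S := hscoer.continuousLinearEquivOfBilin with hS
  -- the constant
  set K : ℝ := 1 / α + ((α + ‖a‖) / (α * β)) ^ 2 with hKdef
  have hK : 0 < K := by positivity
  refine ⟨Real.sqrt K, Real.sqrt_pos.mpr hK, fun f => ?_⟩
  -- construct the solution
  set p : Q := S.symm (rieszMap Q (f.comp T)) with hp
  set u : H := haC.continuousLinearEquivOfBilin.symm (rieszMap H f) - T p with hu
  have hpdef : ∀ q : Q, c p q + a (T p) (T q) = f (T q) := by
    intro q
    have h1 : s p q = ⟪S p, q⟫_ℝ := (hscoer.continuousLinearEquivOfBilin_apply p q).symm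
    have h2 : S p = rieszMap Q (f.comp T) := S.apply_symm_apply _
    rw [← hs p q, h1, h2, rieszMap_inner, ContinuousLinearMap.comp_apply]
  have hEq1 : ∀ v : H, a u v + b v p = f v := by
    intro v
    have h1 : a u v = ⟪haC.continuousLinearEquivOfBilin u, v⟫_ℝ :=
      (haC.continuousLinearEquivOfBilin_apply _ _).symm
    have h2 : haC.continuousLinearEquivOfBilin u
        = rieszMap H f - haC.continuousLinearEquivOfBilin (T p) := by
      rw [hu, map_sub, ContinuousLinearEquiv.apply_symm_apply]
    rw [h1, h2, inner_sub_left, rieszMap_inner,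
      haC.continuousLinearEquivOfBilin_apply, hT p v]
    ring
  have hEq2 : ∀ q : Q, b u q - c p q = 0 := by
    intro q
    have h1 : b u q = a u (T q) := by rw [← hT q u, ha_symm]
    have h2 := hEq1 (T q)
    have h3 : b (T q) p = a (T p) (T q) := (hT p (T q)).symm
    have h4 := hpdef q
    linarith
  clear_value u p
  clear hpdef hp hu
  clear_value K
  clear hS S hscoer hs s hTlow hden hT hBop T Bop haC
  refine ⟨u, p, hEq1, hEq2, ?_, ?_⟩
  · -- stability estimate
    have h1 : a u u + b u p = f u := hEq1 u
    have h2 : b u p - c p p = 0 := hEq2 p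
    have hfu : a u u + c p p = f u := by linarith
    have hau : 0 ≤ a u u := le_trans (by positivity) (ha_coer u)
    have hcp := hc_pos p
    have hfub : f u ≤ ‖f‖ * ‖u‖ :=
      le_trans (le_abs_self _) (by simpa [Real.norm_eq_abs] using f.le_opNorm u)
    have hαu : α * ‖u‖ ≤ ‖f‖ := by
      by_cases hu0 : ‖u‖ = 0
      · rw [hu0, mul_zero]; exact norm_nonneg f
      · have hu' : 0 < ‖u‖ := lt_of_le_of_ne (norm_nonneg u) (Ne.symm hu0)
        apply le_of_mul_le_mul_right _ hu'
        nlinarith [ha_coer u]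
    -- pressure estimate
    obtain ⟨v, hv0, hv⟩ := hb_infsup p
    have hvpos : 0 < ‖v‖ := norm_pos_iff.mpr hv0
    have hbvp : b v p = f v - a u v := by have := hEq1 v; linarith
    have hfvb : f v ≤ ‖f‖ * ‖v‖ :=
      le_trans (le_abs_self _) (by simpa [Real.norm_eq_abs] using f.le_opNorm v)
    have havb : -(‖a‖ * ‖u‖ * ‖v‖) ≤ a u v := by
      have := abs_le.mp (le_trans (le_abs_self |a u v|)
        (by simpa [Real.norm_eq_abs, abs_abs] using a.le_opNorm₂ u v))
      linarith [this.1]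
    have hβp : β * ‖p‖ ≤ ‖f‖ + ‖a‖ * ‖u‖ := by
      apply le_of_mul_le_mul_right _ hvpos
      nlinarith
    have hαβp : α * β * ‖p‖ ≤ (α + ‖a‖) * ‖f‖ := by
      nlinarith [mul_le_mul_of_nonneg_left hβp hα.le,
        mul_le_mul_of_nonneg_left hαu (norm_nonneg a), norm_nonneg a]
    have hpfin : ‖p‖ ^ 2 ≤ ((α + ‖a‖) / (α * β)) ^ 2 * ‖f‖ ^ 2 := by
      have h' : ‖p‖ ≤ (α + ‖a‖) / (α * β) * ‖f‖ := by
        rw [div_mul_eq_mul_div, le_div_iff₀ (by positivity)]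
        nlinarith
      calc ‖p‖ ^ 2 ≤ ((α + ‖a‖) / (α * β) * ‖f‖) ^ 2 :=
            pow_le_pow_left₀ (norm_nonneg p) h' 2
        _ = ((α + ‖a‖) / (α * β)) ^ 2 * ‖f‖ ^ 2 := by ring
    have haufin : a u u + c p p ≤ 1 / α * ‖f‖ ^ 2 := by
      rw [div_mul_eq_mul_div, le_div_iff₀ hα]
      nlinarith [mul_le_mul_of_nonneg_left hfub hα.le,
        mul_le_mul_of_nonneg_left hαu (norm_nonneg f)]
    have htotal : a u u + ‖p‖ ^ 2 + c p p ≤ K * ‖f‖ ^ 2 := by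
      have : K * ‖f‖ ^ 2 = 1 / α * ‖f‖ ^ 2 + ((α + ‖a‖) / (α * β)) ^ 2 * ‖f‖ ^ 2 := by
        rw [hKdef]; ring
      linarith
    calc Real.sqrt (a u u + ‖p‖ ^ 2 + c p p) ≤ Real.sqrt (K * ‖f‖ ^ 2) :=
          Real.sqrt_le_sqrt htotal
      _ = Real.sqrt K * ‖f‖ := by
          rw [Real.sqrt_mul hK.le, Real.sqrt_sq (norm_nonneg f)]
  · -- uniqueness
    intro u' p' hE1' hE2'
    have hd1 : ∀ v : H, a (u' - u) v + b v (p' - p) = 0 := by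
      intro v
      have h1 := hE1' v
      have h2 := hEq1 v
      simp only [map_sub, ContinuousLinearMap.sub_apply]
      linarith
    have hd2 : ∀ q : Q, b (u' - u) q - c (p' - p) q = 0 := by
      intro q
      have h1 := hE2' q
      have h2 := hEq2 q
      simp only [map_sub, ContinuousLinearMap.sub_apply]
      linarith
    have h3 := hd1 (u' - u)
    have h4 := hd2 (p' - p)
    have h5 := ha_coer (u' - u)
    have h6 := hc_pos (p' - p)
    have hdu : u' = u := by
      have hsq : ‖u' - u‖ ^ 2 = 0 := le_antisymm (by nlinarith) (sq_nonneg _)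
      have := pow_eq_zero_iff (two_ne_zero) |>.mp hsq
      exact sub_eq_zero.mp (norm_eq_zero.mp this)
    refine ⟨hdu, ?_⟩
    have hbe : ∀ v : H, b v (p' - p) = 0 := by
      intro v
      have h7 := hd1 v
      rw [hdu, sub_self, map_zero, ContinuousLinearMap.zero_apply] at h7
      linarith
    obtain ⟨v, hv0, hv⟩ := hb_infsup (p' - p)
    have hvpos : 0 < ‖v‖ := norm_pos_iff.mpr hv0
    rw [hbe v] at hv
    have : ‖p' - p‖ = 0 := by
      by_contra h0
      have h : 0 < ‖p' - p‖ := lt_of_le_of_ne (norm_nonneg _) (Ne.symm h0)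
      nlinarith [mul_pos (mul_pos hβ hvpos) h]
    exact sub_eq_zero.mp (norm_eq_zero.mp this)
end

section
/- The solution operator T : L → L is a bounded linear operator which is symmetric with respect to the inner product of L, i.e. ⟨T f, g⟩_L = ⟨f, T g⟩_L for all f, g ∈ L; moreover, for every f ∈ L one has ⟨T f, f⟩_L = a(u_f, u_f) + c(p_f, p_f) ≥ 0. -/
open scoped RealInnerProductSpace

/-- the solution operator `T f = i u_f` is a bounded linear operator on `L`,
is symmetric for the inner product of `L`, and satisfies
`⟨T f, f⟩ = a(u_f,u_f) + c(p_f,p_f) ≥ 0` for all `f`. -/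
theorem solution_operator_symmetric_nonneg
    {H Q L : Type*}
    [NormedAddCommGroup H] [InnerProductSpace ℝ H] [CompleteSpace H]
    [NormedAddCommGroup Q] [InnerProductSpace ℝ Q] [CompleteSpace Q]
    [NormedAddCommGroup L] [InnerProductSpace ℝ L] [CompleteSpace L]
    (a : H →L[ℝ] H →L[ℝ] ℝ) (b : H →L[ℝ] Q →L[ℝ] ℝ) (c : Q →L[ℝ] Q →L[ℝ] ℝ)
    (ha_symm : ∀ u v : H, a u v = a v u)
    (α : ℝ) (hα : 0 < α) (ha_coer : ∀ u : H, α * ‖u‖ ^ 2 ≤ a u u)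
    (β : ℝ) (hβ : 0 < β)
    (hb_infsup : ∀ q : Q, ∃ v : H, v ≠ 0 ∧ β * ‖v‖ * ‖q‖ ≤ b v q)
    (hc_symm : ∀ p q : Q, c p q = c q p) (hc_pos : ∀ p : Q, 0 ≤ c p p)
    (i : H →L[ℝ] L) (u_ : L → H) (p_ : L → Q)
    (hsol : ∀ f : L,
      (∀ v : H, a (u_ f) v + b v (p_ f) = ⟪f, i v⟫) ∧
      (∀ q : Q, b (u_ f) q - c (p_ f) q = 0)) :
    (∃ T : L →L[ℝ] L, ∀ f : L, T f = i (u_ f)) ∧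
    (∀ f g : L, ⟪i (u_ f), g⟫ = ⟪f, i (u_ g)⟫) ∧
    (∀ f : L, ⟪i (u_ f), f⟫ = a (u_ f) (u_ f) + c (p_ f) (p_ f) ∧
      0 ≤ ⟪i (u_ f), f⟫) := by
  -- key identity
  have key : ∀ f : L, a (u_ f) (u_ f) + c (p_ f) (p_ f) = ⟪f, i (u_ f)⟫ := by
    intro f
    have h1 := (hsol f).1 (u_ f)
    have h2 := (hsol f).2 (p_ f)
    linarith
  -- uniqueness
  have uniq : ∀ (f : L) (u : H) (p : Q),
      (∀ v : H, a u v + b v p = ⟪f, i v⟫) →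
      (∀ q : Q, b u q - c p q = 0) → u = u_ f ∧ p = p_ f := by
    intro f u p h1 h2
    set w : H := u - u_ f with hw
    set r : Q := p - p_ f with hr
    have hv : ∀ v : H, a w v + b v r = 0 := by
      intro v
      have e1 := h1 v
      have e2 := (hsol f).1 v
      simp only [hw, hr, map_sub, ContinuousLinearMap.sub_apply]
      linarith
    have hq : ∀ q : Q, b w q - c r q = 0 := by
      intro q
      have e1 := h2 q
      have e2 := (hsol f).2 q
      simp only [hw, hr, map_sub, ContinuousLinearMap.sub_apply]
      linarith
    have haw : a w w + c r r = 0 := by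
      have := hv w; have := hq r; linarith
    have hw0 : w = 0 := by
      have h3 : α * ‖w‖ ^ 2 ≤ a w w := ha_coer w
      have h4 : 0 ≤ c r r := hc_pos r
      have h5 : ‖w‖ ^ 2 ≤ 0 := by nlinarith
      have : ‖w‖ = 0 := by nlinarith [norm_nonneg w]
      simpa using this
    have hbr : ∀ v : H, b v r = 0 := by
      intro v
      have := hv v
      simp only [hw0, map_zero, ContinuousLinearMap.zero_apply] at this
      linarith
    have hr0 : r = 0 := by
      obtain ⟨v, hv0, hvb⟩ := hb_infsup r
      rw [hbr v] at hvb
      have hvn : 0 < ‖v‖ := norm_pos_iff.mpr hv0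
      by_contra hne
      have hrn : 0 < ‖r‖ := norm_pos_iff.mpr hne
      have : 0 < β * ‖v‖ * ‖r‖ := by positivity
      linarith
    constructor
    · have := sub_eq_zero.mp hw0; exact this
    · have := sub_eq_zero.mp hr0; exact this
  -- linearity
  have hadd : ∀ f g : L, u_ (f + g) = u_ f + u_ g := by
    intro f g
    have := uniq (f + g) (u_ f + u_ g) (p_ f + p_ g)
      (by
        intro v
        have e1 := (hsol f).1 v
        have e2 := (hsol g).1 v
        simp only [map_add, ContinuousLinearMap.add_apply, inner_add_left]
        linarith)
      (by
        intro q
        have e1 := (hsol f).2 q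
        have e2 := (hsol g).2 q
        simp only [map_add, ContinuousLinearMap.add_apply]
        linarith)
    exact this.1.symm
  have hsmul : ∀ (s : ℝ) (f : L), u_ (s • f) = s • u_ f := by
    intro s f
    have := uniq (s • f) (s • u_ f) (s • p_ f)
      (by
        intro v
        have e1 := (hsol f).1 v
        simp only [map_smul, ContinuousLinearMap.smul_apply, real_inner_smul_left,
          smul_eq_mul]
        linear_combination s * e1)
      (by
        intro q
        have e1 := (hsol f).2 q
        simp only [map_smul, ContinuousLinearMap.smul_apply, smul_eq_mul]
        linear_combination s * e1)
    exact this.1.symm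
  -- bound
  have hbound : ∀ f : L, ‖i (u_ f)‖ ≤ ‖i‖ ^ 2 / α * ‖f‖ := by
    intro f
    have h1 : α * ‖u_ f‖ ^ 2 ≤ ⟪f, i (u_ f)⟫ := by
      have := key f
      have h3 := ha_coer (u_ f)
      have h4 := hc_pos (p_ f)
      linarith
    have h2 : ⟪f, i (u_ f)⟫ ≤ ‖f‖ * (‖i‖ * ‖u_ f‖) := by
      calc ⟪f, i (u_ f)⟫ ≤ ‖f‖ * ‖i (u_ f)‖ := real_inner_le_norm _ _
        _ ≤ ‖f‖ * (‖i‖ * ‖u_ f‖) := by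
            exact mul_le_mul_of_nonneg_left (i.le_opNorm _) (norm_nonneg f)
    have hu : ‖u_ f‖ ≤ ‖i‖ / α * ‖f‖ := by
      rcases eq_or_lt_of_le (norm_nonneg (u_ f)) with h | h
      · rw [← h]; positivity
      · rw [div_mul_eq_mul_div, le_div_iff₀ hα]
        nlinarith
    calc ‖i (u_ f)‖ ≤ ‖i‖ * ‖u_ f‖ := i.le_opNorm _
      _ ≤ ‖i‖ * (‖i‖ / α * ‖f‖) := by
          exact mul_le_mul_of_nonneg_left hu (norm_nonneg i)
      _ = ‖i‖ ^ 2 / α * ‖f‖ := by ring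
  refine ⟨⟨LinearMap.mkContinuous
      { toFun := fun f => i (u_ f)
        map_add' := by intro f g; show i (u_ (f + g)) = _; rw [hadd, map_add]
        map_smul' := by intro s f; show i (u_ (s • f)) = _; rw [hsmul, map_smul]; rfl }
      (‖i‖ ^ 2 / α) hbound, fun f => rfl⟩, ?_, ?_⟩
  · intro f g
    have e1 : ⟪i (u_ f), g⟫ = a (u_ g) (u_ f) + b (u_ f) (p_ g) := by
      rw [real_inner_comm]; exact ((hsol g).1 (u_ f)).symm
    have e2 : ⟪f, i (u_ g)⟫ = a (u_ f) (u_ g) + b (u_ g) (p_ f) := ((hsol f).1 (u_ g)).symm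
    have e3 : b (u_ f) (p_ g) = c (p_ f) (p_ g) := by have := (hsol f).2 (p_ g); linarith
    have e4 : b (u_ g) (p_ f) = c (p_ g) (p_ f) := by have := (hsol g).2 (p_ f); linarith
    rw [e1, e2, e3, e4, ha_symm, hc_symm]
  · intro f
    have e : ⟪i (u_ f), f⟫ = a (u_ f) (u_ f) + c (p_ f) (p_ f) := by
      rw [real_inner_comm]; exact (key f).symm
    refine ⟨e, ?_⟩
    rw [e]
    have h3 := ha_coer (u_ f)
    have h4 := hc_pos (p_ f)
    nlinarith [sq_nonneg ‖u_ f‖]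
end

section
/- If χ ∈ ℝ with χ ≠ 0 and f ∈ L with f ≠ 0 satisfy T f = χ f, then χ > 0. -/
open scoped RealInnerProductSpace

/-- every nonzero eigenvalue of the solution operator `T f = i u_f`
is positive. -/
theorem solution_operator_eigenvalue_pos
    {H Q L : Type*}
    [NormedAddCommGroup H] [InnerProductSpace ℝ H] [CompleteSpace H]
    [NormedAddCommGroup Q] [InnerProductSpace ℝ Q] [CompleteSpace Q]
    [NormedAddCommGroup L] [InnerProductSpace ℝ L] [CompleteSpace L]
    (a : H →L[ℝ] H →L[ℝ] ℝ) (b : H →L[ℝ] Q →L[ℝ] ℝ) (c : Q →L[ℝ] Q →L[ℝ] ℝ)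
    (ha_symm : ∀ u v : H, a u v = a v u)
    (α : ℝ) (hα : 0 < α) (ha_coer : ∀ u : H, α * ‖u‖ ^ 2 ≤ a u u)
    (β : ℝ) (hβ : 0 < β)
    (hb_infsup : ∀ q : Q, ∃ v : H, v ≠ 0 ∧ β * ‖v‖ * ‖q‖ ≤ b v q)
    (hc_symm : ∀ p q : Q, c p q = c q p) (hc_pos : ∀ p : Q, 0 ≤ c p p)
    (i : H →L[ℝ] L) (u_ : L → H) (p_ : L → Q)
    (hsol : ∀ f : L,
      (∀ v : H, a (u_ f) v + b v (p_ f) = ⟪f, i v⟫) ∧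
      (∀ q : Q, b (u_ f) q - c (p_ f) q = 0))
    (χ : ℝ) (hχ : χ ≠ 0) (f : L) (hf : f ≠ 0)
    (heig : i (u_ f) = χ • f) :
    0 < χ := by
  obtain ⟨h1, h2⟩ := hsol f
  have hv := h1 (u_ f)
  have hq := h2 (p_ f)
  have hbc : b (u_ f) (p_ f) = c (p_ f) (p_ f) := by linarith
  have hinner : ⟪f, i (u_ f)⟫ = a (u_ f) (u_ f) + c (p_ f) (p_ f) := by
    rw [← hv, hbc]
  have hge : 0 ≤ ⟪f, i (u_ f)⟫ := by
    rw [hinner]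
    have := ha_coer (u_ f)
    have := hc_pos (p_ f)
    nlinarith [sq_nonneg ‖u_ f‖]
  rw [heig, real_inner_smul_right, real_inner_self_eq_norm_sq] at hge
  have hfpos : 0 < ‖f‖ ^ 2 := by have := norm_pos_iff.mpr hf; positivity
  rcases lt_trichotomy χ 0 with h | h | h
  · nlinarith
  · exact absurd h hχ
  · exact h
end

section
/- Let f be a continuous linear functional on H, let (u,p) be the solution of the penalized saddle-point problem with datum f, and let (u₀,p₀) ∈ H × Q be a solution of the limit problem with datum f: a(u₀,v) + b(v,p₀) = f(v) for all v ∈ H and b(u₀,q) = 0 for all q ∈ Q. Then N(u − u₀, p − p₀) ≤ C c(p₀,p₀)^{1/2}, where C > 0 depends only on α, β and the boundedness constants of a, b and c. -/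
lemma psd_cauchy_schwarz {Q : Type*} [NormedAddCommGroup Q] [InnerProductSpace ℝ Q]
    (c : Q →L[ℝ] Q →L[ℝ] ℝ)
    (hc_symm : ∀ p q : Q, c p q = c q p) (hc_pos : ∀ p : Q, 0 ≤ c p p)
    (x y : Q) : (c x y) ^ 2 ≤ c x x * c y y := by
  have h : ∀ t : ℝ, 0 ≤ c y y * (t * t) + (2 * c x y) * t + c x x := by
    intro t
    have h1 := hc_pos (x + t • y)
    simp only [map_add, map_smul, ContinuousLinearMap.add_apply,
      ContinuousLinearMap.smul_apply, smul_eq_mul] at h1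
    rw [hc_symm y x] at h1
    nlinarith [h1]
  have hd := discrim_le_zero h
  rw [discrim] at hd
  nlinarith [hd]

set_option maxHeartbeats 1600000 in
/-- comparison of the penalized solution `(u,p)` with a solution
`(u₀,p₀)` of the limit (Stokes-type) problem with the same datum:
`N(u − u₀, p − p₀) ≤ C c(p₀,p₀)^{1/2}`, with `C` depending only on `α`, `β`
and the boundedness constants of `a`, `b`, `c`. -/
theorem penalized_vs_limit_estimate
    {H Q : Type*}
    [NormedAddCommGroup H] [InnerProductSpace ℝ H] [CompleteSpace H]
    [NormedAddCommGroup Q] [InnerProductSpace ℝ Q] [CompleteSpace Q]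
    (a : H →L[ℝ] H →L[ℝ] ℝ) (b : H →L[ℝ] Q →L[ℝ] ℝ) (c : Q →L[ℝ] Q →L[ℝ] ℝ)
    (ha_symm : ∀ u v : H, a u v = a v u)
    (α : ℝ) (hα : 0 < α) (ha_coer : ∀ u : H, α * ‖u‖ ^ 2 ≤ a u u)
    (β : ℝ) (hβ : 0 < β)
    (hb_infsup : ∀ q : Q, ∃ v : H, v ≠ 0 ∧ β * ‖v‖ * ‖q‖ ≤ b v q)
    (hc_symm : ∀ p q : Q, c p q = c q p) (hc_pos : ∀ p : Q, 0 ≤ c p p) :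
    ∃ C > (0 : ℝ), ∀ (f : H →L[ℝ] ℝ) (u : H) (p : Q) (u₀ : H) (p₀ : Q),
      (∀ v : H, a u v + b v p = f v) →
      (∀ q : Q, b u q - c p q = 0) →
      (∀ v : H, a u₀ v + b v p₀ = f v) →
      (∀ q : Q, b u₀ q = 0) →
      Real.sqrt (a (u - u₀) (u - u₀) + ‖p - p₀‖ ^ 2 + c (p - p₀) (p - p₀)) ≤
        C * Real.sqrt (c p₀ p₀) := by
  set K : ℝ := ‖a‖ ^ 2 / (β ^ 2 * α) with hK
  clear_value K
  have hK0 : 0 ≤ K := by rw [hK]; positivity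
  refine ⟨Real.sqrt (2 + K), Real.sqrt_pos.mpr (by linarith), ?_⟩
  intro f u p u₀ p₀ hu hup hu0 hu0q
  set e : H := u - u₀ with he'
  set r : Q := p - p₀ with hr'
  clear_value e r
  -- error equations
  have he : ∀ v : H, a e v + b v r = 0 := by
    intro v
    have h1 := hu v
    have h2 := hu0 v
    simp only [he', hr', map_sub, ContinuousLinearMap.sub_apply]
    linarith
  have heq : ∀ q : Q, b e q = c p q := by
    intro q
    have h1 := hup q
    have h2 := hu0q q
    simp only [he', map_sub, ContinuousLinearMap.sub_apply]
    linarith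
  set S : ℝ := c p₀ p₀ with hS
  clear_value S
  have hS0 : 0 ≤ S := by rw [hS]; exact hc_pos p₀
  -- a(e,e) + c(r,r) = - c(p₀, r)
  have hkey : a e e + c r r = - c p₀ r := by
    have h1 := he e
    have h2 := heq r
    have h3 : c p r = c r r + c p₀ r := by
      have : p = r + p₀ := by rw [hr']; abel
      rw [this]
      simp [map_add, ContinuousLinearMap.add_apply]
    linarith
  have haee0 : 0 ≤ a e e := le_trans (by positivity) (ha_coer e)
  have hcrr0 : 0 ≤ c r r := hc_pos r
  -- Cauchy-Schwarz bound
  have hcs : -c p₀ r ≤ Real.sqrt S * Real.sqrt (c r r) := by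
    have h1 := psd_cauchy_schwarz c hc_symm hc_pos p₀ r
    have h2 : (-c p₀ r) ^ 2 ≤ (Real.sqrt S * Real.sqrt (c r r)) ^ 2 := by
      rw [mul_pow, Real.sq_sqrt hS0, Real.sq_sqrt hcrr0]
      nlinarith [h1]
    have h3 : 0 ≤ Real.sqrt S * Real.sqrt (c r r) := by positivity
    nlinarith [h2, h3]
  have hsqcrr : Real.sqrt (c r r) ≤ Real.sqrt S := by
    have h1 : c r r ≤ Real.sqrt S * Real.sqrt (c r r) := by linarith [hkey ▸ hcs, haee0]
    have h2 : Real.sqrt (c r r) * Real.sqrt (c r r) = c r r := Real.mul_self_sqrt hcrr0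
    nlinarith [Real.sqrt_nonneg (c r r), Real.sqrt_nonneg S]
  have hcrrS : c r r ≤ S := by
    have := Real.mul_self_sqrt hcrr0
    have := Real.mul_self_sqrt hS0
    nlinarith [hsqcrr, Real.sqrt_nonneg (c r r), Real.sqrt_nonneg S]
  have haeeS : a e e ≤ S := by
    have h1 : a e e ≤ Real.sqrt S * Real.sqrt (c r r) := by
      have := hkey
      linarith [hcs, hcrr0]
    have h2 : Real.sqrt S * Real.sqrt (c r r) ≤ Real.sqrt S * Real.sqrt S := by
      exact mul_le_mul_of_nonneg_left hsqcrr (Real.sqrt_nonneg S)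
    rw [Real.mul_self_sqrt hS0] at h2
    linarith
  -- bound on ‖e‖²
  have heS : ‖e‖ ^ 2 ≤ S / α := by
    have := ha_coer e
    rw [le_div_iff₀ hα]
    nlinarith
  -- inf-sup bound on ‖r‖
  have hrnorm : ‖r‖ ≤ ‖a‖ / β * ‖e‖ := by
    obtain ⟨v, hv0, hbv⟩ := hb_infsup r
    have hvpos : 0 < ‖v‖ := norm_pos_iff.mpr hv0
    have h1 : b v r = -(a e v) := by linarith [he v]
    have h2 : -(a e v) ≤ ‖a‖ * ‖e‖ * ‖v‖ := by
      have h3 : ‖a e v‖ ≤ ‖a e‖ * ‖v‖ := (a e).le_opNorm v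
      have h4 : ‖a e‖ ≤ ‖a‖ * ‖e‖ := a.le_opNorm e
      have h5 : -(a e v) ≤ ‖a e v‖ := by
        rw [Real.norm_eq_abs]; exact neg_le_abs _
      calc -(a e v) ≤ ‖a e v‖ := h5
        _ ≤ ‖a e‖ * ‖v‖ := h3
        _ ≤ ‖a‖ * ‖e‖ * ‖v‖ := mul_le_mul_of_nonneg_right h4 (norm_nonneg v)
    have h6 : β * ‖v‖ * ‖r‖ ≤ ‖a‖ * ‖e‖ * ‖v‖ := by
      rw [h1] at hbv; linarith
    have h7 : β * ‖r‖ ≤ ‖a‖ * ‖e‖ := by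
      have h6' : β * ‖r‖ * ‖v‖ ≤ ‖a‖ * ‖e‖ * ‖v‖ := by
        rw [show β * ‖r‖ * ‖v‖ = β * ‖v‖ * ‖r‖ from by ring]; exact h6
      exact le_of_mul_le_mul_right h6' hvpos
    rw [div_mul_eq_mul_div, le_div_iff₀ hβ]
    linarith
  have hr2 : ‖r‖ ^ 2 ≤ K * S := by
    have h1 : ‖r‖ ^ 2 ≤ (‖a‖ / β) ^ 2 * ‖e‖ ^ 2 := by
      have h := mul_self_le_mul_self (norm_nonneg r) hrnorm
      calc ‖r‖ ^ 2 = ‖r‖ * ‖r‖ := sq ‖r‖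
        _ ≤ (‖a‖ / β * ‖e‖) * (‖a‖ / β * ‖e‖) := h
        _ = (‖a‖ / β) ^ 2 * ‖e‖ ^ 2 := by ring
    have h2 : (‖a‖ / β) ^ 2 * ‖e‖ ^ 2 ≤ (‖a‖ / β) ^ 2 * (S / α) :=
      mul_le_mul_of_nonneg_left heS (by positivity)
    have h3 : (‖a‖ / β) ^ 2 * (S / α) = K * S := by
      rw [hK]; field_simp
    linarith
  -- conclude
  have htotal : a e e + ‖r‖ ^ 2 + c r r ≤ (2 + K) * S := by
    have hexp : (2 + K) * S = S + K * S + S := by ring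
    linarith only [haeeS, hr2, hcrrS, hexp]
  calc Real.sqrt (a e e + ‖r‖ ^ 2 + c r r)
      ≤ Real.sqrt ((2 + K) * S) := Real.sqrt_le_sqrt htotal
    _ = Real.sqrt (2 + K) * Real.sqrt S := Real.sqrt_mul (by linarith) S
end

section
/- Assume L ≠ {0} and let S and T be self-adjoint bounded operators on L. Then for every λ ∈ spectrum(S) there exists μ ∈ spectrum(T) with |λ − μ| ≤ ‖S − T‖. -/
open scoped NNReal ENNReal

/-- for self-adjoint bounded operators `S`, `T` on a nontrivial complex
Hilbert space, every spectral point of `S` is within `‖S − T‖` of the spectrum of `T`. -/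
theorem spectrum_dist_le_of_selfAdjoint
    {L : Type*} [NormedAddCommGroup L] [InnerProductSpace ℂ L] [CompleteSpace L]
    [Nontrivial L]
    (S T : L →L[ℂ] L) (hS : IsSelfAdjoint S) (hT : IsSelfAdjoint T) :
    ∀ lam ∈ spectrum ℂ S, ∃ μ ∈ spectrum ℂ T, ‖lam - μ‖ ≤ ‖S - T‖ := by
  intro lam hlam
  by_cases hmem : lam ∈ spectrum ℂ T
  · exact ⟨lam, hmem, by simp⟩
  by_contra hcon
  push_neg at hcon
  by_cases hTS : S = T
  · exact absurd (hTS ▸ hlam) hmem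
  set x : L →L[ℂ] L := algebraMap ℂ (L →L[ℂ] L) lam - T with hx
  have hu : IsUnit x := spectrum.notMem_iff.mp hmem
  -- x is star-normal
  have hcomm : Commute x (star x) := by
    have h1 : star x = algebraMap ℂ (L →L[ℂ] L) (starRingEnd ℂ lam) - T := by
      rw [hx, star_sub, hT.star_eq, ← algebraMap_star_comm]
      rfl
    rw [h1, hx]
    have c1 : Commute (algebraMap ℂ (L →L[ℂ] L) lam)
        (algebraMap ℂ (L →L[ℂ] L) (starRingEnd ℂ lam)) := Algebra.commutes _ _
    have c2 : Commute (algebraMap ℂ (L →L[ℂ] L) lam) T := Algebra.commutes _ _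
    have c3 : Commute (algebraMap ℂ (L →L[ℂ] L) (starRingEnd ℂ lam)) T := Algebra.commutes _ _
    exact (c1.sub_right c2).sub_left (c3.symm.sub_right (Commute.refl T))
  have hnormal_inv : IsStarNormal (↑hu.unit⁻¹ : L →L[ℂ] L) := by
    constructor
    have hcu : Commute (↑hu.unit : L →L[ℂ] L) (↑(star hu.unit) : L →L[ℂ] L) := by
      rw [Units.coe_star, hu.unit_spec]; exact hcomm
    have h2 := (hcu.units_inv_left).units_inv_right
    rw [Units.coe_star_inv] at h2
    exact h2.symm
  have hSTpos : (0:ℝ) < ‖S - T‖ :=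
    norm_pos_iff.mpr (sub_ne_zero.mpr hTS)
  have hne : ‖S - T‖₊ ≠ 0 := by
    simpa using ne_of_gt hSTpos
  -- every point of the spectrum of x is far from 0
  have hfar : ∀ z ∈ spectrum ℂ x, ‖S - T‖ < ‖z‖ := by
    intro z hz
    rw [hx, ← spectrum.singleton_sub_eq] at hz
    obtain ⟨l, hl, μ, hμ, rfl⟩ := hz
    rcases hl with rfl
    exact hcon μ hμ
  have hrad : spectralRadius ℂ (↑hu.unit⁻¹ : L →L[ℂ] L) < ((‖S - T‖₊⁻¹ : ℝ≥0) : ℝ≥0∞) := by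
    apply spectrum.spectralRadius_lt_of_forall_lt
    intro z hz
    have hz0 : z ≠ 0 := by
      intro h
      exact spectrum.zero_notMem ℂ (hu.unit⁻¹ : (L →L[ℂ] L)ˣ).isUnit (h ▸ hz)
    have h3 : (↑(Units.mk0 z hz0)⁻¹ : ℂ) ∈ spectrum ℂ
        ((((hu.unit⁻¹)⁻¹ : (L →L[ℂ] L)ˣ) : L →L[ℂ] L)) :=
      spectrum.inv_mem_iff.mp (by simpa using hz)
    rw [inv_inv] at h3
    have hz' : z⁻¹ ∈ spectrum ℂ x := by simpa [hu.unit_spec] using h3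
    have h4 := hfar _ hz'
    rw [norm_inv] at h4
    have hzpos : 0 < ‖z‖ := norm_pos_iff.mpr hz0
    have h5 : ‖z‖ < ‖S - T‖⁻¹ := by
      have := inv_strictAnti₀ hSTpos h4
      rwa [inv_inv] at this
    rw [← NNReal.coe_lt_coe]
    push_cast
    simpa using h5
  have hnorm_inv : ‖(↑hu.unit⁻¹ : L →L[ℂ] L)‖ < ‖S - T‖⁻¹ := by
    rw [hnormal_inv.spectralRadius_eq_nnnorm, ENNReal.coe_lt_coe, ← NNReal.coe_lt_coe] at hrad
    simpa using hrad
  have hinvpos : 0 < ‖(↑hu.unit⁻¹ : L →L[ℂ] L)‖ := Units.norm_pos _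
  have hpert : ‖T - S‖ < ‖(↑hu.unit⁻¹ : L →L[ℂ] L)‖⁻¹ := by
    rw [norm_sub_rev]
    have := inv_strictAnti₀ hinvpos hnorm_inv
    simpa using this
  have hunit : IsUnit (algebraMap ℂ (L →L[ℂ] L) lam - S) := by
    have h6 := (hu.unit.add (T - S) hpert).isUnit
    have hval : (↑(hu.unit.add (T - S) hpert) : L →L[ℂ] L)
        = algebraMap ℂ (L →L[ℂ] L) lam - S := by
      rw [Units.val_add, hu.unit_spec, hx]; abel
    rwa [hval] at h6
  exact (spectrum.notMem_iff.mpr hunit) hlam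
end

section
/- Let T_h be a compact self-adjoint operator on L, let χ_h be a nonzero eigenvalue of T_h with eigenspace E_h := ker(T_h − χ_h·id), and let χ ∈ ℝ and δ > 0 be such that |μ − χ| ≥ δ for every μ ∈ spectrum(T_h) \ {χ_h}. Then for every unit vector w ∈ L, the distance from w to E_h satisfies dist(w, E_h) ≤ ‖T_h w − χ w‖ / δ. -/
/-!
Let `f(z) = min (|z - χ|, δ)`. By the separation hypothesis, the disc `|z - χ| < δ` meets the
spectrum of `T_h` at most in `χ_h`, so `1 - f/δ` vanishes on the spectrum away from `χ_h` and
`P = 1 - δ⁻¹ f(T_h)` maps `L` into `E_h`. Hence `dist(w, E_h) ≤ ‖w - P w‖ = δ⁻¹ ‖f(T_h) w‖`, and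
`‖f(T_h) w‖ ≤ ‖(T_h - χ) w‖` because `|f| ≤ |z - χ|` gives
`f(T_h)* f(T_h) ≤ (T_h - χ)* (T_h - χ)` by monotonicity of the functional calculus.
-/

open scoped ComplexOrder

theorem ContinuousLinearMap.norm_apply_le_of_star_mul_self_le {𝕜 E : Type*} [RCLike 𝕜]
    [NormedAddCommGroup E] [InnerProductSpace 𝕜 E] [CompleteSpace E] {B C : E →L[𝕜] E}
    (h : star C * C ≤ star B * B) (v : E) : ‖C v‖ ≤ ‖B v‖ := by
  have hpos := ((le_def _ _).mp h).re_inner_nonneg_left v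
  rw [sub_apply, inner_sub_left, map_sub, sub_nonneg] at hpos
  rw [← pow_le_pow_iff_left₀ (norm_nonneg _) (norm_nonneg _) two_ne_zero,
    apply_norm_sq_eq_inner_adjoint_left, apply_norm_sq_eq_inner_adjoint_left]
  simpa only [star_eq_adjoint, mul_def] using hpos

theorem star_cfc_mul_cfc_le_of_norm_le {A : Type*} [CStarAlgebra A] [PartialOrder A]
    [StarOrderedRing A] {a : A} [IsStarNormal a] {f g : ℂ → ℂ}
    (hfg : ∀ z ∈ spectrum ℂ a, ‖f z‖ ≤ ‖g z‖)
    (hf : ContinuousOn f (spectrum ℂ a) := by cfc_cont_tac)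
    (hg : ContinuousOn g (spectrum ℂ a) := by cfc_cont_tac) :
    star (cfc f a) * cfc f a ≤ star (cfc g a) * cfc g a := by
  rw [← cfc_star, ← cfc_mul _ _ a, ← cfc_star, ← cfc_mul _ _ a]
  refine cfc_mono fun z hz => ?_
  simp only [RCLike.star_def, Complex.conj_mul']
  exact_mod_cast pow_le_pow_left₀ (norm_nonneg _) (hfg z hz) 2

theorem mul_cfc_eq_smul_cfc {R A : Type*} {p : A → Prop} [CommSemiring R] [StarRing R]
    [MetricSpace R] [IsTopologicalSemiring R] [ContinuousStar R] [TopologicalSpace A] [Ring A]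
    [StarRing A] [Algebra R A] [ContinuousFunctionalCalculus R A p] {a : A} (ha : p a)
    {f : R → R} (μ : R) (hf : ∀ x ∈ spectrum R a, f x ≠ 0 → x = μ) :
    a * cfc f a = μ • cfc f a := by
  by_cases hfc : ContinuousOn f (spectrum R a)
  · calc a * cfc f a = cfc (fun x => x * f x) a := by rw [cfc_mul _ _ a, cfc_id' R a]
      _ = cfc (fun x => μ * f x) a := cfc_congr fun x hx => by
          by_cases h : f x = 0
          · simp [h]
          · rw [hf x hx h]
      _ = μ • cfc f a := cfc_const_mul ..
  · simp [cfc_apply_of_not_continuousOn a hfc]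

theorem dist_to_eigenspace_le_residual_general
    {L : Type*} [NormedAddCommGroup L] [InnerProductSpace ℂ L] [CompleteSpace L]
    (Th : L →L[ℂ] L) (hThsa : IsSelfAdjoint Th)
    (χh : ℂ)
    (χ : ℝ) (δ : ℝ) (hδ : 0 < δ)
    (hsep : ∀ μ ∈ spectrum ℂ Th, μ ≠ χh → δ ≤ ‖μ - (χ : ℂ)‖) :
    ∀ w : L, ‖w‖ = 1 →
      Metric.infDist w ((LinearMap.ker ((Th - χh • (1 : L →L[ℂ] L)) : L →ₗ[ℂ] L) : Submodule ℂ L) : Set L) ≤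
        ‖Th w - (χ : ℂ) • w‖ / δ := by
  intro w _
  have hTh : IsStarNormal Th := hThsa.isStarNormal
  let f : ℂ → ℂ := fun z => (min ‖z - χ‖ δ : ℝ)
  set p := w - (δ : ℂ)⁻¹ • cfc f Th w
  have hf_le : ‖cfc f Th w‖ ≤ ‖Th w - (χ : ℂ) • w‖ := by
    have := ContinuousLinearMap.norm_apply_le_of_star_mul_self_le
      (star_cfc_mul_cfc_le_of_norm_le (a := Th) (f := f) (g := fun z => z - χ) fun z _ => by
        simp [f, abs_of_nonneg (le_min (norm_nonneg _) hδ.le)]) w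
    rwa [cfc_sub .., cfc_id' .., cfc_const .., Algebra.algebraMap_eq_smul_one] at this
  have hp : p ∈ LinearMap.ker ((Th - χh • (1 : L →L[ℂ] L)) : L →ₗ[ℂ] L) := by
    have hP := mul_cfc_eq_smul_cfc (a := Th) (f := fun z => 1 - (δ⁻¹ : ℂ) * f z) hTh χh
      fun z hz hz0 => by_contra fun hne => hz0 <| by
        simp [f, min_eq_right (hsep z hz hne), hδ.ne']
    rw [cfc_sub (fun _ => 1) (fun z => (δ⁻¹ : ℂ) * f z) Th, cfc_const_mul (δ⁻¹ : ℂ) f Th,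
      cfc_const_one ℂ Th] at hP
    simpa [p, sub_eq_zero] using congr($hP w)
  calc Metric.infDist w _ ≤ ‖w - p‖ := by
        simpa [dist_eq_norm] using Metric.infDist_le_dist_of_mem hp
    _ = δ⁻¹ * ‖cfc f Th w‖ := by simp [p, norm_smul, abs_of_pos hδ]
    _ ≤ ‖Th w - (χ : ℂ) • w‖ / δ := by
        rw [div_eq_inv_mul]; gcongr

/-- if `χ_h` is a nonzero eigenvalue of the compact self-adjoint operator
`T_h` with eigenspace `E_h`, and all other spectral points of `T_h` are at distance at
least `δ` from `χ ∈ ℝ`, then every unit vector `w` satisfies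
`dist(w, E_h) ≤ ‖T_h w − χ w‖ / δ`. -/
theorem dist_to_eigenspace_le_residual
    {L : Type*} [NormedAddCommGroup L] [InnerProductSpace ℂ L] [CompleteSpace L]
    (Th : L →L[ℂ] L) (hThc : IsCompactOperator ⇑Th) (hThsa : IsSelfAdjoint Th)
    (χh : ℂ) (hχh : χh ≠ 0)
    (heig : LinearMap.ker ((Th - χh • (1 : L →L[ℂ] L)) : L →ₗ[ℂ] L) ≠ ⊥)
    (χ : ℝ) (δ : ℝ) (hδ : 0 < δ)
    (hsep : ∀ μ ∈ spectrum ℂ Th, μ ≠ χh → δ ≤ ‖μ - (χ : ℂ)‖) :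
    ∀ w : L, ‖w‖ = 1 →
      Metric.infDist w ((LinearMap.ker ((Th - χh • (1 : L →L[ℂ] L)) : L →ₗ[ℂ] L) : Submodule ℂ L) : Set L) ≤
        ‖Th w - (χ : ℂ) • w‖ / δ :=
  dist_to_eigenspace_le_residual_general Th hThsa χh χ δ hδ hsep
end

section
/- Let f ∈ L, let (u,p) be the solution of the penalized saddle-point problem with datum v ↦ ⟨f, i v⟩_L, and let (u_h,p_h) be the solution of the discrete problem with the same datum. Let (φ,ψ) be the solution of the penalized saddle-point problem with datum v ↦ ⟨i(u − u_h), i v⟩_L. Then for every (φ_h,ψ_h) ∈ H_h × Q_h one has ‖i(u − u_h)‖_L² ≤ C · N(φ − φ_h, ψ − ψ_h) · N(u − u_h, p − p_h), where C > 0 depends only on α and the boundedness constants of a, b and c. -/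
open scoped RealInnerProductSpace

/-- Cauchy–Schwarz for a symmetric positive semidefinite bilinear form. -/
lemma bilin_cauchy_schwarz {E : Type*} [NormedAddCommGroup E] [NormedSpace ℝ E]
    (B : E →L[ℝ] E →L[ℝ] ℝ) (hsym : ∀ x y, B x y = B y x) (hpos : ∀ x, 0 ≤ B x x)
    (x y : E) : |B x y| ≤ Real.sqrt (B x x) * Real.sqrt (B y y) := by
  have hq : ∀ t : ℝ, 0 ≤ B y y * (t * t) + (2 * B x y) * t + B x x := by
    intro t
    have h := hpos (x + t • y)
    simp only [map_add, map_smul, ContinuousLinearMap.add_apply,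
      ContinuousLinearMap.smul_apply, smul_eq_mul] at h
    rw [show (B y) x = B x y from hsym y x] at h
    linarith [h]
  have hd := discrim_le_zero hq
  rw [discrim] at hd
  have h2 : (B x y) ^ 2 ≤ B x x * B y y := by nlinarith
  calc |B x y| ≤ Real.sqrt (B x x * B y y) := Real.abs_le_sqrt h2
    _ = Real.sqrt (B x x) * Real.sqrt (B y y) := Real.sqrt_mul (hpos x) _

set_option maxHeartbeats 1000000 in
/-- abstract Aubin–Nitsche duality bound:
`‖i(u − u_h)‖² ≤ C N(φ − φ_h, ψ − ψ_h) N(u − u_h, p − p_h)` for any discrete pair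
`(φ_h, ψ_h)`, where `(φ,ψ)` solves the dual problem with datum `i(u − u_h)`. -/
theorem aubin_nitsche_duality
    {H Q L : Type*}
    [NormedAddCommGroup H] [InnerProductSpace ℝ H] [CompleteSpace H]
    [NormedAddCommGroup Q] [InnerProductSpace ℝ Q] [CompleteSpace Q]
    [NormedAddCommGroup L] [InnerProductSpace ℝ L] [CompleteSpace L]
    (a : H →L[ℝ] H →L[ℝ] ℝ) (b : H →L[ℝ] Q →L[ℝ] ℝ) (c : Q →L[ℝ] Q →L[ℝ] ℝ)
    (ha_symm : ∀ u v : H, a u v = a v u)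
    (α : ℝ) (hα : 0 < α) (ha_coer : ∀ u : H, α * ‖u‖ ^ 2 ≤ a u u)
    (β : ℝ) (hβ : 0 < β)
    (hb_infsup : ∀ q : Q, ∃ v : H, v ≠ 0 ∧ β * ‖v‖ * ‖q‖ ≤ b v q)
    (hc_symm : ∀ p q : Q, c p q = c q p) (hc_pos : ∀ p : Q, 0 ≤ c p p)
    (i : H →L[ℝ] L)
    (Hh : Submodule ℝ H) (Qh : Submodule ℝ Q)
    (hHh_closed : IsClosed (Hh : Set H)) (hQh_closed : IsClosed (Qh : Set Q))
    (β' : ℝ) (hβ' : 0 < β')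
    (hb_infsup_h : ∀ qh ∈ Qh, ∃ vh ∈ Hh, vh ≠ 0 ∧ β' * ‖vh‖ * ‖qh‖ ≤ b vh qh) :
    ∃ C > (0 : ℝ), ∀ (f : L) (u : H) (p : Q) (uh : H) (ph : Q) (φ : H) (ψ : Q),
      (∀ v : H, a u v + b v p = ⟪f, i v⟫) →
      (∀ q : Q, b u q - c p q = 0) →
      uh ∈ Hh → ph ∈ Qh →
      (∀ vh ∈ Hh, a uh vh + b vh ph = ⟪f, i vh⟫) →
      (∀ qh ∈ Qh, b uh qh - c ph qh = 0) →
      (∀ v : H, a φ v + b v ψ = ⟪i (u - uh), i v⟫) →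
      (∀ q : Q, b φ q - c ψ q = 0) →
      ∀ φh ∈ Hh, ∀ ψh ∈ Qh,
        ‖i (u - uh)‖ ^ 2 ≤
          C * Real.sqrt (a (φ - φh) (φ - φh) + ‖ψ - ψh‖ ^ 2 + c (ψ - ψh) (ψ - ψh)) *
            Real.sqrt (a (u - uh) (u - uh) + ‖p - ph‖ ^ 2 + c (p - ph) (p - ph)) := by
  have hsα : (0 : ℝ) < Real.sqrt α := Real.sqrt_pos.mpr hα
  refine ⟨2 + 2 * (‖b‖ / Real.sqrt α), by positivity, ?_⟩
  intro f u p uh ph φ ψ hu1 hu2 huh hph huh1 huh2 hφ1 hφ2 φh hφh ψh hψh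
  have ha_pos : ∀ x : H, 0 ≤ a x x := fun x => le_trans (by positivity) (ha_coer x)
  -- Galerkin orthogonality
  have hg1 : a (u - uh) φh + b φh (p - ph) = 0 := by
    have h1 := hu1 φh; have h2 := huh1 φh hφh
    simp only [map_sub, ContinuousLinearMap.sub_apply]
    linarith
  have hg2 : b (u - uh) ψh - c (p - ph) ψh = 0 := by
    have h1 := hu2 ψh; have h2 := huh2 ψh hψh
    simp only [map_sub, ContinuousLinearMap.sub_apply]
    linarith
  have hdual := hφ1 (u - uh)
  have hconstr := hφ2 (p - ph)
  -- key identity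
  have key : ⟪i (u - uh), i (u - uh)⟫ =
      a (u - uh) (φ - φh) + b (φ - φh) (p - ph) + b (u - uh) (ψ - ψh)
        - c (ψ - ψh) (p - ph) := by
    simp only [map_sub, ContinuousLinearMap.sub_apply] at hg1 hg2 hdual hconstr ⊢
    linarith [ha_symm u φ, ha_symm uh φ, hc_symm ψh p, hc_symm ψh ph]
  set S1 := a (φ - φh) (φ - φh) + ‖ψ - ψh‖ ^ 2 + c (ψ - ψh) (ψ - ψh) with hS1
  set S2 := a (u - uh) (u - uh) + ‖p - ph‖ ^ 2 + c (p - ph) (p - ph) with hS2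
  set s1 := Real.sqrt S1 with hs1
  set s2 := Real.sqrt S2 with hs2
  have hs1nn : 0 ≤ s1 := Real.sqrt_nonneg _
  have hs2nn : 0 ≤ s2 := Real.sqrt_nonneg _
  have h_s1a : Real.sqrt (a (φ - φh) (φ - φh)) ≤ s1 :=
    Real.sqrt_le_sqrt (by linarith [hc_pos (ψ - ψh), sq_nonneg ‖ψ - ψh‖])
  have h_s1c : Real.sqrt (c (ψ - ψh) (ψ - ψh)) ≤ s1 :=
    Real.sqrt_le_sqrt (by linarith [ha_pos (φ - φh), sq_nonneg ‖ψ - ψh‖])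
  have h_s1n : ‖ψ - ψh‖ ≤ s1 := by
    rw [show ‖ψ - ψh‖ = Real.sqrt (‖ψ - ψh‖ ^ 2) from (Real.sqrt_sq (norm_nonneg _)).symm]
    exact Real.sqrt_le_sqrt (by linarith [ha_pos (φ - φh), hc_pos (ψ - ψh)])
  have h_s2a : Real.sqrt (a (u - uh) (u - uh)) ≤ s2 :=
    Real.sqrt_le_sqrt (by linarith [hc_pos (p - ph), sq_nonneg ‖p - ph‖])
  have h_s2c : Real.sqrt (c (p - ph) (p - ph)) ≤ s2 :=
    Real.sqrt_le_sqrt (by linarith [ha_pos (u - uh), sq_nonneg ‖p - ph‖])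
  have h_s2n : ‖p - ph‖ ≤ s2 := by
    rw [show ‖p - ph‖ = Real.sqrt (‖p - ph‖ ^ 2) from (Real.sqrt_sq (norm_nonneg _)).symm]
    exact Real.sqrt_le_sqrt (by linarith [ha_pos (u - uh), hc_pos (p - ph)])
  -- norm bounds from coercivity
  have hnorm_bound : ∀ x : H, ‖x‖ ≤ Real.sqrt (a x x) / Real.sqrt α := by
    intro x
    have h : Real.sqrt (α * ‖x‖ ^ 2) ≤ Real.sqrt (a x x) := Real.sqrt_le_sqrt (ha_coer x)
    rw [Real.sqrt_mul hα.le, Real.sqrt_sq (norm_nonneg _)] at h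
    rw [le_div_iff₀ hsα, mul_comm]
    exact h
  have h_ndφ : ‖φ - φh‖ ≤ s1 / Real.sqrt α :=
    le_trans (hnorm_bound _) (by gcongr)
  have h_ne : ‖u - uh‖ ≤ s2 / Real.sqrt α :=
    le_trans (hnorm_bound _) (by gcongr)
  -- term-by-term bounds
  have t1 : a (u - uh) (φ - φh) ≤ s2 * s1 :=
    calc a (u - uh) (φ - φh) ≤ |a (u - uh) (φ - φh)| := le_abs_self _
      _ ≤ Real.sqrt (a (u - uh) (u - uh)) * Real.sqrt (a (φ - φh) (φ - φh)) :=
        bilin_cauchy_schwarz a ha_symm ha_pos _ _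
      _ ≤ s2 * s1 := mul_le_mul h_s2a h_s1a (Real.sqrt_nonneg _) hs2nn
  have t4 : -c (ψ - ψh) (p - ph) ≤ s1 * s2 :=
    calc -c (ψ - ψh) (p - ph) ≤ |c (ψ - ψh) (p - ph)| := neg_le_abs _
      _ ≤ Real.sqrt (c (ψ - ψh) (ψ - ψh)) * Real.sqrt (c (p - ph) (p - ph)) :=
        bilin_cauchy_schwarz c hc_symm hc_pos _ _
      _ ≤ s1 * s2 := mul_le_mul h_s1c h_s2c (Real.sqrt_nonneg _) hs1nn
  have t2 : b (φ - φh) (p - ph) ≤ ‖b‖ / Real.sqrt α * (s1 * s2) :=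
    calc b (φ - φh) (p - ph) ≤ ‖b (φ - φh) (p - ph)‖ := le_abs_self _
      _ ≤ ‖b‖ * ‖φ - φh‖ * ‖p - ph‖ := ContinuousLinearMap.le_opNorm₂ b _ _
      _ ≤ ‖b‖ * (s1 / Real.sqrt α) * s2 := by gcongr <;> positivity
      _ = ‖b‖ / Real.sqrt α * (s1 * s2) := by ring
  have t3 : b (u - uh) (ψ - ψh) ≤ ‖b‖ / Real.sqrt α * (s1 * s2) :=
    calc b (u - uh) (ψ - ψh) ≤ ‖b (u - uh) (ψ - ψh)‖ := le_abs_self _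
      _ ≤ ‖b‖ * ‖u - uh‖ * ‖ψ - ψh‖ := ContinuousLinearMap.le_opNorm₂ b _ _
      _ ≤ ‖b‖ * (s2 / Real.sqrt α) * s1 := by gcongr <;> positivity
      _ = ‖b‖ / Real.sqrt α * (s1 * s2) := by ring
  have hfinal : ‖i (u - uh)‖ ^ 2 ≤ (2 + 2 * (‖b‖ / Real.sqrt α)) * (s1 * s2) := by
    rw [← real_inner_self_eq_norm_sq, key]
    linarith [t1, t2, t3, t4]
  calc ‖i (u - uh)‖ ^ 2 ≤ (2 + 2 * (‖b‖ / Real.sqrt α)) * (s1 * s2) := hfinal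
    _ = (2 + 2 * (‖b‖ / Real.sqrt α)) * s1 * s2 := by ring
end

section
/- Assume there is ρ ≥ 0 such that for every g ∈ L the solution (u_g,p_g) of the penalized saddle-point problem with datum v ↦ ⟨g, i v⟩_L satisfies inf{ N(u_g − v_h, p_g − q_h) : (v_h,q_h) ∈ H_h × Q_h } ≤ ρ ‖g‖_L. Define the discrete solution operator T_h : L → L by T_h f := i u_{f,h}, where (u_{f,h}, p_{f,h}) is the solution of the discrete problem with datum v ↦ ⟨f, i v⟩_L. Then for every f ∈ L, ‖T f − T_h f‖_L ≤ C ρ² ‖f‖_L, where C > 0 depends only on α, β, β̃ and the boundedness constants of a, b and c. -/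
open scoped RealInnerProductSpace

/-!
Céa plus Aubin–Nitsche. Testing a discrete pair `(e, p)` with `(e + δ z, -p)`, where `z ∈ H_h`
realises the discrete inf-sup condition for `p` and `δ` is small, shows that `A` satisfies a
discrete inf-sup condition in the norm `N`; since `A` is also bounded in `N`, the discrete error
`(u - u_h, p - p_h)` is quasi-optimal. For the duality step let `g = T f - T_h f`: symmetry of `A`
gives `‖g‖² = A((u - u_h, p - p_h), (u_g, p_g))`, Galerkin orthogonality allows subtracting any
discrete pair from `(u_g, p_g)`, and boundedness of `A` then bounds `‖g‖²` by the product of two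
best-approximation errors, at most `ρ ‖f‖ · ρ ‖g‖`.
-/

lemma le_mul_of_forall_le_mul_of_iInf₂_le {ι κ : Sort*} [Nonempty ι] [Nonempty κ]
    {f : ι → κ → ℝ} {x r s : ℝ} (hr : 0 ≤ r) (h : ∀ i j, x ≤ r * f i j)
    (hs : ⨅ i, ⨅ j, f i j ≤ s) : x ≤ r * s :=
  calc x ≤ r * ⨅ i, ⨅ j, f i j := by
        simp only [Real.mul_iInf_of_nonneg hr]
        exact le_ciInf fun i => le_ciInf (h i)
    _ ≤ r * s := mul_le_mul_of_nonneg_left hs hr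

lemma abs_le_add_div_two_of_sq_le_mul {x P Q : ℝ} (hP : 0 ≤ P) (hQ : 0 ≤ Q)
    (h : x ^ 2 ≤ P * Q) : |x| ≤ (P + Q) / 2 :=
  abs_le_of_sq_le_sq (by nlinarith [sq_nonneg (P - Q)]) (by positivity)

lemma ContinuousLinearMap.apply_self_le_opNorm_mul_sq {E : Type*} [SeminormedAddCommGroup E]
    [NormedSpace ℝ E] (B : E →L[ℝ] E →L[ℝ] ℝ) (x : E) : B x x ≤ ‖B‖ * ‖x‖ ^ 2 :=
  (le_abs_self _).trans ((B.le_opNorm₂ x x).trans_eq (by ring))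

namespace LinearMap.BilinForm

variable {E : Type*} [AddCommGroup E] [Module ℝ E] {B : LinearMap.BilinForm ℝ E}

lemma abs_apply_le_sqrt_mul_sqrt_of_symm (hpos : ∀ x, 0 ≤ B x x) (hB : LinearMap.IsSymm B)
    (x y : E) : |B x y| ≤ √(B x x) * √(B y y) := by
  rw [← Real.sqrt_mul (hpos x)]
  exact Real.abs_le_sqrt (apply_sq_le_of_symm B hpos hB x y)

lemma apply_add_add_le (hpos : ∀ x, 0 ≤ B x x) (hB : LinearMap.IsSymm B) (x y : E) :
    B (x + y) (x + y) ≤ 2 * B x x + 2 * B y y := by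
  have := hpos (x - y)
  have hyx : B y x = B x y := hB.eq y x
  simp only [map_add, map_sub, LinearMap.add_apply, LinearMap.sub_apply, hyx] at this ⊢
  linarith

end LinearMap.BilinForm

section Galerkin

variable {X : Type*} [AddCommGroup X] [Module ℝ X] {B : LinearMap.BilinForm ℝ X} {N : X → ℝ}
  {S : Submodule ℝ X} {M γ C : ℝ}

lemma galerkin_quasi_optimal (hN : ∀ x, 0 ≤ N x) (hM : 0 ≤ M) (hγ : 0 < γ) (hC : 0 ≤ C)
    (hbound : ∀ x y, |B x y| ≤ M * N x * N y)
    (hstab : ∀ x ∈ S, ∃ y ∈ S, γ * N x ^ 2 ≤ B x y ∧ N y ≤ C * N x)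
    {x xh xs : X} (hxh : xh ∈ S) (hxs : xs ∈ S) (horth : ∀ y ∈ S, B (x - xh) y = 0) :
    N (xh - xs) ≤ M * C / γ * N (x - xs) := by
  obtain ⟨y, hy, hlower, hupper⟩ := hstab (xh - xs) (S.sub_mem hxh hxs)
  have hsplit : B (xh - xs) y = B (x - xs) y := by
    have := horth y hy
    simp only [map_sub, LinearMap.sub_apply] at this ⊢
    linarith
  have hkey : γ * N (xh - xs) ^ 2 ≤ M * C * N (x - xs) * N (xh - xs) :=
    calc γ * N (xh - xs) ^ 2 ≤ B (x - xs) y := hsplit ▸ hlower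
      _ ≤ M * N (x - xs) * N y := (le_abs_self _).trans (hbound _ _)
      _ ≤ M * N (x - xs) * (C * N (xh - xs)) := by gcongr; exact mul_nonneg hM (hN _)
      _ = M * C * N (x - xs) * N (xh - xs) := by ring
  rw [div_mul_eq_mul_div, le_div_iff₀ hγ]
  rcases (hN (xh - xs)).eq_or_lt with h0 | hpos
  · rw [← h0, zero_mul]
    exact mul_nonneg (mul_nonneg hM hC) (hN _)
  · nlinarith

lemma galerkin_error_pairing_le (hN : ∀ x, 0 ≤ N x) (hM : 0 ≤ M) (hγ : 0 < γ) (hC : 0 ≤ C)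
    (hbound : ∀ x y, |B x y| ≤ M * N x * N y)
    (hstab : ∀ x ∈ S, ∃ y ∈ S, γ * N x ^ 2 ≤ B x y ∧ N y ≤ C * N x)
    {x xh xs zs : X} (hxh : xh ∈ S) (hxs : xs ∈ S) (hzs : zs ∈ S)
    (horth : ∀ y ∈ S, B (x - xh) y = 0) (z : X) :
    B (x - xh) z ≤ M * (1 + M * C / γ) * N (x - xs) * N (z - zs) := by
  have hcea := galerkin_quasi_optimal hN hM hγ hC hbound hstab hxh hxs horth
  have hsplit : B (x - xh) z = B (x - xs) (z - zs) - B (xh - xs) (z - zs) := by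
    have := horth zs hzs
    simp only [map_sub, LinearMap.sub_apply] at this ⊢
    linarith
  calc B (x - xh) z ≤ M * N (x - xs) * N (z - zs) + M * N (xh - xs) * N (z - zs) := by
        rw [hsplit]
        linarith [le_abs_self (B (x - xs) (z - zs)), neg_abs_le (B (xh - xs) (z - zs)),
          hbound (x - xs) (z - zs), hbound (xh - xs) (z - zs)]
    _ ≤ M * N (x - xs) * N (z - zs) + M * (M * C / γ * N (x - xs)) * N (z - zs) := by
        gcongr
        exact hN _
    _ = M * (1 + M * C / γ) * N (x - xs) * N (z - zs) := by ring

end Galerkin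

lemma exists_norm_eq_and_mul_sq_le {E F : Type*} [NormedAddCommGroup E] [NormedSpace ℝ E]
    [SeminormedAddCommGroup F] [NormedSpace ℝ F] {b : E →L[ℝ] F →L[ℝ] ℝ} {V : Submodule ℝ E}
    {β : ℝ} {q : F} (h : ∃ v ∈ V, v ≠ 0 ∧ β * ‖v‖ * ‖q‖ ≤ b v q) :
    ∃ z ∈ V, ‖z‖ = ‖q‖ ∧ β * ‖q‖ ^ 2 ≤ b z q := by
  obtain ⟨v, hvV, hv, hbv⟩ := h
  have hv' : 0 < ‖v‖ := norm_pos_iff.mpr hv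
  refine ⟨(‖q‖ / ‖v‖) • v, V.smul_mem _ hvV, ?_, ?_⟩
  · rw [norm_smul, Real.norm_of_nonneg (by positivity), div_mul_cancel₀ _ hv'.ne']
  · calc β * ‖q‖ ^ 2 = ‖q‖ / ‖v‖ * (β * ‖v‖ * ‖q‖) := by field_simp
      _ ≤ ‖q‖ / ‖v‖ * b v q := by gcongr
      _ = b ((‖q‖ / ‖v‖) • v) q := by simp only [map_smul, smul_apply, smul_eq_mul]

section SaddlePoint

variable {H Q : Type*} [NormedAddCommGroup H] [NormedSpace ℝ H]
  [NormedAddCommGroup Q] [NormedSpace ℝ Q]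
  (a : H →L[ℝ] H →L[ℝ] ℝ) (b : H →L[ℝ] Q →L[ℝ] ℝ) (c : Q →L[ℝ] Q →L[ℝ] ℝ)

noncomputable def saddleForm : LinearMap.BilinForm ℝ (H × Q) :=
  LinearMap.mk₂ ℝ (fun x y => a x.1 y.1 + b y.1 x.2 + b x.1 y.2 - c x.2 y.2)
    (fun _ _ _ => by simp only [Prod.fst_add, Prod.snd_add, map_add, add_apply]; ring)
    (fun _ _ _ => by
      simp only [Prod.smul_fst, Prod.smul_snd, map_smul, smul_apply, smul_eq_mul]; ring)
    (fun _ _ _ => by simp only [Prod.fst_add, Prod.snd_add, map_add, add_apply]; ring)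
    (fun _ _ _ => by
      simp only [Prod.smul_fst, Prod.smul_snd, map_smul, smul_apply, smul_eq_mul]; ring)

@[simp]
lemma saddleForm_apply (x y : H × Q) :
    saddleForm a b c x y = a x.1 y.1 + b y.1 x.2 + b x.1 y.2 - c x.2 y.2 := rfl

noncomputable def saddleNorm (x : H × Q) : ℝ :=
  √(a x.1 x.1 + ‖x.2‖ ^ 2 + c x.2 x.2)

variable {a b c}

lemma saddleForm_comm (ha : ∀ u v, a u v = a v u) (hc : ∀ p q, c p q = c q p) (x y : H × Q) :
    saddleForm a b c x y = saddleForm a b c y x := by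
  simp only [saddleForm_apply, ha x.1, hc x.2]
  ring

lemma saddleForm_apply_eq_of_solves {V : Submodule ℝ H} {W : Submodule ℝ Q} {ℓ : H → ℝ} {u : H}
    {p : Q} (hmom : ∀ v ∈ V, a u v + b v p = ℓ v) (hmass : ∀ q ∈ W, b u q - c p q = 0)
    {y : H × Q} (hy : y ∈ V.prod W) : saddleForm a b c (u, p) y = ℓ y.1 := by
  have := hmass y.2 hy.2
  rw [saddleForm_apply, ← hmom y.1 hy.1]
  linarith

lemma saddleNorm_nonneg (x : H × Q) : 0 ≤ saddleNorm a c x := Real.sqrt_nonneg _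

lemma saddleNorm_sq (ha : ∀ u, 0 ≤ a u u) (hc : ∀ p, 0 ≤ c p p) (x : H × Q) :
    saddleNorm a c x ^ 2 = a x.1 x.1 + ‖x.2‖ ^ 2 + c x.2 x.2 :=
  Real.sq_sqrt (by linarith [ha x.1, hc x.2, sq_nonneg ‖x.2‖])

lemma sqrt_fst_le_saddleNorm (hc : ∀ p, 0 ≤ c p p) (x : H × Q) :
    √(a x.1 x.1) ≤ saddleNorm a c x :=
  Real.sqrt_le_sqrt (by linarith [hc x.2, sq_nonneg ‖x.2‖])

lemma sqrt_snd_le_saddleNorm (ha : ∀ u, 0 ≤ a u u) (x : H × Q) :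
    √(c x.2 x.2) ≤ saddleNorm a c x :=
  Real.sqrt_le_sqrt (by linarith [ha x.1, sq_nonneg ‖x.2‖])

lemma norm_snd_le_saddleNorm (ha : ∀ u, 0 ≤ a u u) (hc : ∀ p, 0 ≤ c p p) (x : H × Q) :
    ‖x.2‖ ≤ saddleNorm a c x :=
  Real.le_sqrt_of_sq_le (by linarith [ha x.1, hc x.2])

lemma mul_norm_fst_le_saddleNorm {α : ℝ} (hα : 0 < α) (ha : ∀ u, α * ‖u‖ ^ 2 ≤ a u u)
    (hc : ∀ p, 0 ≤ c p p) (x : H × Q) : √α * ‖x.1‖ ≤ saddleNorm a c x := by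
  refine le_trans ?_ (sqrt_fst_le_saddleNorm hc x)
  rw [← Real.sqrt_sq (norm_nonneg x.1), ← Real.sqrt_mul hα.le]
  exact Real.sqrt_le_sqrt (ha x.1)

lemma abs_apply_fst_snd_le {α : ℝ} (hα : 0 < α) (ha : ∀ u, α * ‖u‖ ^ 2 ≤ a u u)
    (hc : ∀ p, 0 ≤ c p p) (x y : H × Q) :
    |b x.1 y.2| ≤ ‖b‖ / √α * saddleNorm a c x * saddleNorm a c y := by
  have ha' : ∀ u, 0 ≤ a u u := fun u => (by positivity : 0 ≤ α * ‖u‖ ^ 2).trans (ha u)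
  calc |b x.1 y.2| ≤ ‖b‖ * ‖x.1‖ * ‖y.2‖ := b.le_opNorm₂ x.1 y.2
    _ = ‖b‖ / √α * (√α * ‖x.1‖) * ‖y.2‖ := by field_simp
    _ ≤ ‖b‖ / √α * saddleNorm a c x * saddleNorm a c y :=
        mul_le_mul (mul_le_mul_of_nonneg_left (mul_norm_fst_le_saddleNorm hα ha hc x)
          (by positivity)) (norm_snd_le_saddleNorm ha' hc y) (norm_nonneg _)
          (mul_nonneg (by positivity) (saddleNorm_nonneg x))

lemma abs_saddleForm_le (ha_symm : ∀ u v, a u v = a v u) {α : ℝ} (hα : 0 < α)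
    (ha : ∀ u, α * ‖u‖ ^ 2 ≤ a u u) (hc_symm : ∀ p q, c p q = c q p) (hc : ∀ p, 0 ≤ c p p)
    (x y : H × Q) :
    |saddleForm a b c x y| ≤ (2 + 2 * ‖b‖ / √α) * saddleNorm a c x * saddleNorm a c y := by
  have ha' : ∀ u, 0 ≤ a u u := fun u => (by positivity : 0 ≤ α * ‖u‖ ^ 2).trans (ha u)
  have hNx := saddleNorm_nonneg (a := a) (c := c) x
  have haxy : |a x.1 y.1| ≤ saddleNorm a c x * saddleNorm a c y :=
    (LinearMap.BilinForm.abs_apply_le_sqrt_mul_sqrt_of_symm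
      (B := ContinuousLinearMap.toLinearMap₁₂ a) ha' ⟨ha_symm⟩ x.1 y.1).trans
      (mul_le_mul (sqrt_fst_le_saddleNorm hc x) (sqrt_fst_le_saddleNorm hc y)
        (Real.sqrt_nonneg _) hNx)
  have hcxy : |c x.2 y.2| ≤ saddleNorm a c x * saddleNorm a c y :=
    (LinearMap.BilinForm.abs_apply_le_sqrt_mul_sqrt_of_symm
      (B := ContinuousLinearMap.toLinearMap₁₂ c) hc ⟨hc_symm⟩ x.2 y.2).trans
      (mul_le_mul (sqrt_snd_le_saddleNorm ha' x) (sqrt_snd_le_saddleNorm ha' y)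
        (Real.sqrt_nonneg _) hNx)
  have hbyx := abs_apply_fst_snd_le (b := b) hα ha hc y x
  have hbxy := abs_apply_fst_snd_le (b := b) hα ha hc x y
  calc |saddleForm a b c x y|
        ≤ |a x.1 y.1| + |b y.1 x.2| + |b x.1 y.2| + |c x.2 y.2| :=
        (abs_sub _ _).trans (add_le_add_left (abs_add_three _ _ _) _)
    _ ≤ saddleNorm a c x * saddleNorm a c y + ‖b‖ / √α * saddleNorm a c y * saddleNorm a c x
          + ‖b‖ / √α * saddleNorm a c x * saddleNorm a c y + saddleNorm a c x * saddleNorm a c y :=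
        add_le_add (add_le_add (add_le_add haxy hbyx) hbxy) hcxy
    _ = (2 + 2 * ‖b‖ / √α) * saddleNorm a c x * saddleNorm a c y := by ring

lemma saddleForm_apply_add_smul_neg (e z : H) (p : Q) (δ : ℝ) :
    saddleForm a b c (e, p) (e + δ • z, -p) = a e e + c p p + δ * (a e z + b z p) := by
  simp only [saddleForm_apply, map_add, map_smul, map_neg, add_apply, smul_apply, smul_eq_mul]
  ring

lemma mul_saddleNorm_sq_le_saddleForm (ha_symm : ∀ u v, a u v = a v u) (ha : ∀ u, 0 ≤ a u u)
    (hc : ∀ p, 0 ≤ c p p) {β' : ℝ} (hβ' : 0 ≤ β') {e z : H} {p : Q} (hz : ‖z‖ = ‖p‖)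
    (hbz : β' * ‖p‖ ^ 2 ≤ b z p) :
    min (1 / 2) (β' ^ 2 / (2 * (‖a‖ + 1))) * saddleNorm a c (e, p) ^ 2 ≤
      saddleForm a b c (e, p) (e + (β' / (‖a‖ + 1)) • z, -p) := by
  set K := ‖a‖ + 1
  have hK : 0 < K := by positivity
  set δ := β' / K
  set γ := min (1 / 2) (β' ^ 2 / (2 * K))
  have hδ : 0 ≤ δ := by positivity
  have hδK : δ * K = β' := div_mul_cancel₀ β' hK.ne'
  have hCS : (δ * a e z) ^ 2 ≤ a e e * (δ * β' * ‖p‖ ^ 2) :=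
    calc (δ * a e z) ^ 2 ≤ δ ^ 2 * (a e e * a z z) := by
          rw [mul_pow]
          exact mul_le_mul_of_nonneg_left (LinearMap.BilinForm.apply_sq_le_of_symm
            (ContinuousLinearMap.toLinearMap₁₂ a) ha ⟨ha_symm⟩ e z) (sq_nonneg δ)
      _ ≤ δ ^ 2 * (a e e * (K * ‖p‖ ^ 2)) := by
          gcongr
          · exact ha e
          · calc a z z ≤ ‖a‖ * ‖z‖ ^ 2 := ContinuousLinearMap.apply_self_le_opNorm_mul_sq a z
              _ ≤ K * ‖p‖ ^ 2 := by rw [hz]; gcongr; linarith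
      _ = a e e * (δ * β' * ‖p‖ ^ 2) := by rw [← hδK]; ring
  have hcross := abs_le_add_div_two_of_sq_le_mul (ha e) (by positivity) hCS
  have hγ₁ : γ ≤ 1 / 2 := min_le_left _ _
  have hγ₂ : γ ≤ δ * β' / 2 := by
    refine (min_le_right _ _).trans_eq ?_
    rw [← hδK]
    field_simp
  rw [saddleNorm_sq ha hc, saddleForm_apply_add_smul_neg]
  nlinarith [neg_abs_le (δ * a e z), mul_le_mul_of_nonneg_left hbz hδ, ha e, hc p, sq_nonneg ‖p‖]

lemma saddleNorm_add_smul_neg_le (ha_symm : ∀ u v, a u v = a v u) (ha : ∀ u, 0 ≤ a u u)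
    (hc : ∀ p, 0 ≤ c p p) (β' : ℝ) {e z : H} {p : Q} (hz : ‖z‖ = ‖p‖) :
    saddleNorm a c (e + (β' / (‖a‖ + 1)) • z, -p) ≤
      √(2 + 2 * (β' ^ 2 / (‖a‖ + 1))) * saddleNorm a c (e, p) := by
  set K := ‖a‖ + 1
  have hK : 0 < K := by positivity
  set δ := β' / K with hδ
  have hδz : a (δ • z) (δ • z) ≤ β' ^ 2 / K * ‖p‖ ^ 2 :=
    calc a (δ • z) (δ • z) ≤ ‖a‖ * ‖δ • z‖ ^ 2 :=
          ContinuousLinearMap.apply_self_le_opNorm_mul_sq a _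
      _ ≤ K * (δ ^ 2 * ‖p‖ ^ 2) := by
          rw [norm_smul, mul_pow, Real.norm_eq_abs, sq_abs, hz]
          gcongr
          linarith
      _ = β' ^ 2 / K * ‖p‖ ^ 2 := by rw [hδ]; field_simp
  have hsum : a (e + δ • z) (e + δ • z) ≤ 2 * a e e + 2 * a (δ • z) (δ • z) :=
    LinearMap.BilinForm.apply_add_add_le (B := ContinuousLinearMap.toLinearMap₁₂ a)
      ha ⟨ha_symm⟩ e (δ • z)
  rw [saddleNorm, saddleNorm, ← Real.sqrt_mul (by positivity)]
  refine Real.sqrt_le_sqrt ?_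
  simp only [norm_neg, map_neg, neg_apply, neg_neg]
  nlinarith [ha e, hc p, sq_nonneg ‖p‖, div_nonneg (sq_nonneg β') hK.le]

lemma exists_mul_saddleNorm_sq_le_saddleForm (ha_symm : ∀ u v, a u v = a v u)
    (ha : ∀ u, 0 ≤ a u u) (hc : ∀ p, 0 ≤ c p p) {Hh : Submodule ℝ H} {Qh : Submodule ℝ Q}
    {β' : ℝ} (hβ' : 0 ≤ β')
    (hinf : ∀ qh ∈ Qh, ∃ vh ∈ Hh, vh ≠ 0 ∧ β' * ‖vh‖ * ‖qh‖ ≤ b vh qh)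
    {x : H × Q} (hx : x ∈ Hh.prod Qh) :
    ∃ y ∈ Hh.prod Qh,
      min (1 / 2) (β' ^ 2 / (2 * (‖a‖ + 1))) * saddleNorm a c x ^ 2 ≤ saddleForm a b c x y ∧
      saddleNorm a c y ≤ √(2 + 2 * (β' ^ 2 / (‖a‖ + 1))) * saddleNorm a c x := by
  obtain ⟨e, p⟩ := x
  obtain ⟨z, hzHh, hz, hbz⟩ := exists_norm_eq_and_mul_sq_le (hinf p hx.2)
  refine ⟨(e + (β' / (‖a‖ + 1)) • z, -p),
    ⟨Hh.add_mem hx.1 (Hh.smul_mem _ hzHh), Qh.neg_mem hx.2⟩,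
    mul_saddleNorm_sq_le_saddleForm ha_symm ha hc hβ' hz hbz,
    saddleNorm_add_smul_neg_le ha_symm ha hc β' hz⟩

lemma exists_saddleForm_galerkin_error_le (ha_symm : ∀ u v, a u v = a v u) {α : ℝ}
    (hα : 0 < α) (ha : ∀ u, α * ‖u‖ ^ 2 ≤ a u u) (hc_symm : ∀ p q, c p q = c q p)
    (hc : ∀ p, 0 ≤ c p p) {Hh : Submodule ℝ H} {Qh : Submodule ℝ Q} {β' : ℝ} (hβ' : 0 < β')
    (hinf : ∀ qh ∈ Qh, ∃ vh ∈ Hh, vh ≠ 0 ∧ β' * ‖vh‖ * ‖qh‖ ≤ b vh qh) :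
    ∃ K > 0, ∀ {x xh xs zs : H × Q}, xh ∈ Hh.prod Qh → xs ∈ Hh.prod Qh → zs ∈ Hh.prod Qh →
      (∀ y ∈ Hh.prod Qh, saddleForm a b c (x - xh) y = 0) → ∀ z,
        saddleForm a b c (x - xh) z ≤ K * saddleNorm a c (x - xs) * saddleNorm a c (z - zs) := by
  have ha' : ∀ u, 0 ≤ a u u := fun u => (by positivity : 0 ≤ α * ‖u‖ ^ 2).trans (ha u)
  have hM : 0 < 2 + 2 * ‖b‖ / √α := by positivity
  have hγ : 0 < min (1 / 2) (β' ^ 2 / (2 * (‖a‖ + 1))) := lt_min (by norm_num) (by positivity)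
  exact ⟨_, by positivity, fun hxh hxs hzs horth z =>
    galerkin_error_pairing_le (B := saddleForm a b c) (N := saddleNorm a c) (S := Hh.prod Qh)
      saddleNorm_nonneg hM.le hγ (Real.sqrt_nonneg _)
      (abs_saddleForm_le ha_symm hα ha hc_symm hc)
      (fun _ => exists_mul_saddleNorm_sq_le_saddleForm ha_symm ha' hc hβ'.le hinf)
      hxh hxs hzs horth z⟩

end SaddlePoint

theorem solution_operator_double_order_convergence_general
    {H Q L : Type*}
    [NormedAddCommGroup H] [InnerProductSpace ℝ H]
    [NormedAddCommGroup Q] [InnerProductSpace ℝ Q]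
    [NormedAddCommGroup L] [InnerProductSpace ℝ L]
    (a : H →L[ℝ] H →L[ℝ] ℝ) (b : H →L[ℝ] Q →L[ℝ] ℝ) (c : Q →L[ℝ] Q →L[ℝ] ℝ)
    (ha_symm : ∀ u v : H, a u v = a v u)
    (α : ℝ) (hα : 0 < α) (ha_coer : ∀ u : H, α * ‖u‖ ^ 2 ≤ a u u)
    (hc_symm : ∀ p q : Q, c p q = c q p) (hc_pos : ∀ p : Q, 0 ≤ c p p)
    (i : H →L[ℝ] L)
    (Hh : Submodule ℝ H) (Qh : Submodule ℝ Q)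
    (β' : ℝ) (hβ' : 0 < β')
    (hb_infsup_h : ∀ qh ∈ Qh, ∃ vh ∈ Hh, vh ≠ 0 ∧ β' * ‖vh‖ * ‖qh‖ ≤ b vh qh) :
    ∃ C > (0 : ℝ), ∀ ρ : ℝ, 0 ≤ ρ →
      ∀ (u_ : L → H) (p_ : L → Q) (uh_ : L → H) (ph_ : L → Q),
        (∀ g : L,
          (∀ v : H, a (u_ g) v + b v (p_ g) = ⟪g, i v⟫) ∧
          (∀ q : Q, b (u_ g) q - c (p_ g) q = 0)) →
        (∀ f : L, uh_ f ∈ Hh ∧ ph_ f ∈ Qh ∧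
          (∀ vh ∈ Hh, a (uh_ f) vh + b vh (ph_ f) = ⟪f, i vh⟫) ∧
          (∀ qh ∈ Qh, b (uh_ f) qh - c (ph_ f) qh = 0)) →
        (∀ g : L,
          (⨅ (vh : Hh) (qh : Qh),
            Real.sqrt (a (u_ g - ↑vh) (u_ g - ↑vh) + ‖p_ g - ↑qh‖ ^ 2 +
              c (p_ g - ↑qh) (p_ g - ↑qh))) ≤ ρ * ‖g‖) →
        ∀ f : L, ‖i (u_ f) - i (uh_ f)‖ ≤ C * ρ ^ 2 * ‖f‖ := by
  obtain ⟨K, hK, hpair⟩ :=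
    exists_saddleForm_galerkin_error_le ha_symm hα ha_coer hc_symm hc_pos hβ' hb_infsup_h
  refine ⟨K, hK, fun ρ hρ u_ p_ uh_ ph_ hcont hdisc happrox f => ?_⟩
  obtain ⟨huh, hph, hdisc_mom, hdisc_mass⟩ := hdisc f
  have hsol : ∀ g y, saddleForm a b c (u_ g, p_ g) y = ⟪g, i y.1⟫ := fun g y =>
    saddleForm_apply_eq_of_solves (V := ⊤) (W := ⊤) (fun v _ => (hcont g).1 v)
      (fun q _ => (hcont g).2 q) ⟨trivial, trivial⟩
  have horth : ∀ y ∈ Hh.prod Qh, saddleForm a b c ((u_ f, p_ f) - (uh_ f, ph_ f)) y = 0 :=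
    fun y hy => by
      rw [map_sub, LinearMap.sub_apply, hsol, saddleForm_apply_eq_of_solves hdisc_mom hdisc_mass hy,
        sub_self]
  set g := i (u_ f) - i (uh_ f)
  have hdual : ‖g‖ ^ 2 = saddleForm a b c ((u_ f, p_ f) - (uh_ f, ph_ f)) (u_ g, p_ g) := by
    rw [saddleForm_comm ha_symm hc_symm, hsol, ← real_inner_self_eq_norm_sq]
    simp [g]
  have hnorm_sq_le : ∀ (vh : Hh) (qh : Qh) (vh' : Hh) (qh' : Qh), ‖g‖ ^ 2 ≤
      K * saddleNorm a c (u_ f - vh, p_ f - qh) * saddleNorm a c (u_ g - vh', p_ g - qh') :=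
    fun vh qh vh' qh' => by
      have := hpair (xs := ((vh : H), (qh : Q))) (zs := ((vh' : H), (qh' : Q))) ⟨huh, hph⟩
        ⟨vh.2, qh.2⟩ ⟨vh'.2, qh'.2⟩ horth (u_ g, p_ g)
      rwa [← hdual, Prod.mk_sub_mk, Prod.mk_sub_mk] at this
  have happrox' : ∀ g, ⨅ (vh : Hh) (qh : Qh), saddleNorm a c (u_ g - vh, p_ g - qh) ≤ ρ * ‖g‖ :=
    happrox
  have hbound : ‖g‖ ^ 2 ≤ K * ρ ^ 2 * ‖f‖ * ‖g‖ :=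
    le_mul_of_forall_le_mul_of_iInf₂_le (r := K * ρ * ‖g‖) (by positivity) (fun vh qh =>
      (le_mul_of_forall_le_mul_of_iInf₂_le (mul_nonneg hK.le (saddleNorm_nonneg _))
        (hnorm_sq_le vh qh) (happrox' g)).trans_eq (by ring)) (happrox' f) |>.trans_eq (by ring)
  nlinarith [(by positivity : 0 ≤ K * ρ ^ 2 * ‖f‖)]

/-- if the best-approximation error of the continuous solutions by the
discrete spaces is bounded by `ρ ‖g‖` for every datum `g`, then the solution operators
satisfy the double-order bound `‖T f − T_h f‖ ≤ C ρ² ‖f‖`, with `C` depending only on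
`α`, `β`, `β̃` and the boundedness constants of `a`, `b`, `c`. -/
theorem solution_operator_double_order_convergence
    {H Q L : Type*}
    [NormedAddCommGroup H] [InnerProductSpace ℝ H] [CompleteSpace H]
    [NormedAddCommGroup Q] [InnerProductSpace ℝ Q] [CompleteSpace Q]
    [NormedAddCommGroup L] [InnerProductSpace ℝ L] [CompleteSpace L]
    (a : H →L[ℝ] H →L[ℝ] ℝ) (b : H →L[ℝ] Q →L[ℝ] ℝ) (c : Q →L[ℝ] Q →L[ℝ] ℝ)
    (ha_symm : ∀ u v : H, a u v = a v u)
    (α : ℝ) (hα : 0 < α) (ha_coer : ∀ u : H, α * ‖u‖ ^ 2 ≤ a u u)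
    (β : ℝ) (hβ : 0 < β)
    (hb_infsup : ∀ q : Q, ∃ v : H, v ≠ 0 ∧ β * ‖v‖ * ‖q‖ ≤ b v q)
    (hc_symm : ∀ p q : Q, c p q = c q p) (hc_pos : ∀ p : Q, 0 ≤ c p p)
    (i : H →L[ℝ] L)
    (Hh : Submodule ℝ H) (Qh : Submodule ℝ Q)
    (hHh_closed : IsClosed (Hh : Set H)) (hQh_closed : IsClosed (Qh : Set Q))
    (β' : ℝ) (hβ' : 0 < β')
    (hb_infsup_h : ∀ qh ∈ Qh, ∃ vh ∈ Hh, vh ≠ 0 ∧ β' * ‖vh‖ * ‖qh‖ ≤ b vh qh) :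
    ∃ C > (0 : ℝ), ∀ ρ : ℝ, 0 ≤ ρ →
      ∀ (u_ : L → H) (p_ : L → Q) (uh_ : L → H) (ph_ : L → Q),
        (∀ g : L,
          (∀ v : H, a (u_ g) v + b v (p_ g) = ⟪g, i v⟫) ∧
          (∀ q : Q, b (u_ g) q - c (p_ g) q = 0)) →
        (∀ f : L, uh_ f ∈ Hh ∧ ph_ f ∈ Qh ∧
          (∀ vh ∈ Hh, a (uh_ f) vh + b vh (ph_ f) = ⟪f, i vh⟫) ∧
          (∀ qh ∈ Qh, b (uh_ f) qh - c (ph_ f) qh = 0)) →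
        (∀ g : L,
          (⨅ (vh : Hh) (qh : Qh),
            Real.sqrt (a (u_ g - ↑vh) (u_ g - ↑vh) + ‖p_ g - ↑qh‖ ^ 2 +
              c (p_ g - ↑qh) (p_ g - ↑qh))) ≤ ρ * ‖g‖) →
        ∀ f : L, ‖i (u_ f) - i (uh_ f)‖ ≤ C * ρ ^ 2 * ‖f‖ :=
  solution_operator_double_order_convergence_general a b c ha_symm α hα ha_coer hc_symm hc_pos i Hh
    Qh β' hβ' hb_infsup_h
end
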